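/- arXiv:1202.3052 — 15 statements merged into one kernel-verified Lean document; each statement's English description precedes it below -/
import Mathlib

section
/- Consider the leakage game on τ bits: Δ is drawn uniformly at random from the set of vectors Fin τ → ZMod 2, and, independently of Δ, a pair (S, c) with S a finite subset of Fin τ and c ∈ {0,1} is drawn from an arbitrary probability distribution L. Then for every guessing strategy, i.e., every function g mapping a pair (S, restriction of Δ to S) to a full vector Fin τ → ZMod 2, the probability that c = 1 and g(S, Δ|_S) agrees with Δ on every coordinate outside S is exactly 2^{-τ} · E_{(S,c)←L}[c · 2^{|S|}]. -/
/-!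
For a fixed leaked set `S`, a vector `Δ` on which the guess succeeds is determined by its
restriction to `S` (outside `S` it must equal the guess made from that restriction), and every
restriction occurs. So exactly `2 ^ |S|` of the `2 ^ τ` equally likely vectors are guessed
correctly; averaging over `(S, c) ← L` gives the formula.
-/

open scoped ENNReal
open Finset

theorem card_filter_restrict_agree_outside {ι α : Type*} [Fintype ι] [DecidableEq ι]
    [Fintype α] [DecidableEq α] (S : Finset ι) (g : (S → α) → ι → α) :
    #{Δ : ι → α | ∀ i ∉ S, g (fun j : S => Δ j) i = Δ i} = Fintype.card α ^ #S := by
  let extend (f : S → α) (i : ι) : α := if h : i ∈ S then f ⟨i, h⟩ else g f i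
  have restrict_extend (f : S → α) : (fun j : S => extend f j) = f := by
    funext j; simp [extend, j.2]
  rw [← Fintype.card_coe S, ← Fintype.card_fun, ← card_univ]
  refine card_nbij' (fun Δ j => Δ j) extend (by simp) ?_ ?_ (fun f _ => restrict_extend f)
  · intro f _
    simp +contextual [extend]
  · intro Δ hΔ
    simp only [coe_filter, mem_univ, true_and, Set.mem_ofPred_eq] at hΔ
    funext i
    by_cases hi : i ∈ S
    · simp [extend, hi]
    · simp [extend, hi, hΔ i hi]

theorem sum_uniformOfFintype_mul_ite_agree_outside {ι α : Type*} [Fintype ι] [DecidableEq ι]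
    [Fintype α] [DecidableEq α] [Nonempty α] (S : Finset ι) (g : (S → α) → ι → α) :
    ∑ Δ : ι → α, PMF.uniformOfFintype (ι → α) Δ *
        (if ∀ i ∉ S, g (fun j : S => Δ j) i = Δ i then 1 else 0)
      = ((Fintype.card α : ℝ≥0∞) ^ Fintype.card ι)⁻¹ * (Fintype.card α : ℝ≥0∞) ^ #S := by
  simp only [PMF.uniformOfFintype_apply, ← mul_sum, sum_boole,
    card_filter_restrict_agree_outside, Fintype.card_fun]
  push_cast
  rfl

theorem stmt_0_general (τ : ℕ)
    (L : PMF (Finset (Fin τ) × Bool))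
    (g : (S : Finset (Fin τ)) → ({x // x ∈ S} → ZMod 2) → (Fin τ → ZMod 2)) :
    ∑ Δ : Fin τ → ZMod 2, ∑ sc : Finset (Fin τ) × Bool,
      (PMF.uniformOfFintype (Fin τ → ZMod 2)) Δ * L sc *
        (if sc.2 = true ∧ ∀ i, i ∉ sc.1 → g sc.1 (fun j => Δ j.1) i = Δ i then 1 else 0)
    = (2 : ℝ≥0∞) ^ (-(τ : ℤ)) *
        ∑ sc : Finset (Fin τ) × Bool,
          L sc * (if sc.2 = true then 1 else 0) * 2 ^ sc.1.card := by
  rw [sum_comm, mul_sum]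
  refine sum_congr rfl fun ⟨S, c⟩ _ => ?_
  cases c
  · simp
  · have h := sum_uniformOfFintype_mul_ite_agree_outside S (g S)
    simp only [ZMod.card, Fintype.card_fin, Nat.cast_ofNat] at h
    simp only [if_true, true_and, mul_one, mul_right_comm _ (L _), ← sum_mul]
    trans ((2 : ℝ≥0∞) ^ τ)⁻¹ * 2 ^ #S * L (S, true)
    · congr 1
      -- `h` states this up to the `Decidable` instance of the `if`
      convert h
    · rw [ENNReal.zpow_neg, zpow_natCast]
      ring

/-- Leakage game on `τ` bits: for every guessing strategy `g`, the probability (over a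
uniform `Δ : Fin τ → ZMod 2` and an independent sample `(S, c) ← L`) that `c = 1` and
`g (S, Δ|_S)` agrees with `Δ` on every coordinate outside `S` is exactly
`2 ^ (-τ) * E[(c : ℝ≥0∞) * 2 ^ |S|]`. -/
theorem stmt_0 (τ : ℕ) (hτ : 0 < τ)
    (L : PMF (Finset (Fin τ) × Bool))
    (g : (S : Finset (Fin τ)) → ({x // x ∈ S} → ZMod 2) → (Fin τ → ZMod 2)) :
    ∑ Δ : Fin τ → ZMod 2, ∑ sc : Finset (Fin τ) × Bool,
      (PMF.uniformOfFintype (Fin τ → ZMod 2)) Δ * L sc *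
        (if sc.2 = true ∧ ∀ i, i ∉ sc.1 → g sc.1 (fun j => Δ j.1) i = Δ i then 1 else 0)
    = (2 : ℝ≥0∞) ^ (-(τ : ℤ)) *
        ∑ sc : Finset (Fin τ) × Bool,
          L sc * (if sc.2 = true then 1 else 0) * 2 ^ sc.1.card :=
  stmt_0_general τ L g
end

section
/- Let A be a ψ × τ matrix over ZMod 2 and let S be a subset of the column indices Fin τ such that the columns of A with indices outside S span all of the vector space Fin ψ → ZMod 2. Then the pushforward of the uniform distribution on vectors Γ : Fin τ → ZMod 2 under the map Γ ↦ (Γ|_S, A ⬝ Γ) is the uniform distribution on the product of (assignments S → ZMod 2) and (Fin ψ → ZMod 2). In particular, A ⬝ Γ is uniformly distributed and independent of the coordinates of Γ inside S. -/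
/-!
The map `Γ ↦ (Γ|_S, A Γ)` is additive, and it is surjective: extend prescribed values on `S` by
zero, then correct `A Γ` by a combination of the columns outside `S`, which leaves `Γ|_S` alone.
A surjective homomorphism of finite groups has all fibres of the same size (cosets of the
kernel), so it pushes the uniform distribution forward to the uniform distribution.
-/

open scoped ENNReal Matrix
open Finset

theorem PMF.map_uniformOfFintype_of_card_fiber {α β : Type*} [Fintype α] [Nonempty α]
    [Fintype β] [Nonempty β] [DecidableEq β] (f : α → β)
    (h : ∀ b, #{a | f a = b} * Fintype.card β = Fintype.card α) :
    (uniformOfFintype α).map f = uniformOfFintype β := by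
  ext b
  have hfib : (#{a | f a = b} : ℝ≥0∞) ≠ 0 := by
    have := Fintype.card_ne_zero (α := α)
    rw [← h b] at this
    exact_mod_cast left_ne_zero_of_mul this
  simp only [map_apply, uniformOfFintype_apply, tsum_fintype, sum_ite, sum_const_zero,
    add_zero, sum_const, nsmul_eq_mul, eq_comm (a := b), ← h b, Nat.cast_mul]
  rw [ENNReal.mul_inv (.inl hfib) (.inl (ENNReal.natCast_ne_top _)), ← mul_assoc,
    ENNReal.mul_inv_cancel hfib (ENNReal.natCast_ne_top _), one_mul]

theorem AddMonoidHom.map_uniformOfFintype_of_surjective {G H : Type*} [AddGroup G] [Fintype G]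
    [AddGroup H] [Fintype H] [DecidableEq H] (f : G →+ H) (hf : Function.Surjective f) :
    (PMF.uniformOfFintype G).map f = PMF.uniformOfFintype H := by
  refine PMF.map_uniformOfFintype_of_card_fiber f fun b => ?_
  have hfib (c : H) : #{a | f a = c} = #{a | f a = b} :=
    card_fiber_eq_of_mem_range f (hf c) (hf b)
  calc #{a | f a = b} * Fintype.card H = ∑ c : H, #{a | f a = c} := by
        simp [hfib, mul_comm]
    _ = Fintype.card G := (card_eq_sum_card_fiberwise fun a _ => mem_univ (f a)).symm

theorem Matrix.exists_mulVec_eq_of_span_cols {m n R : Type*} [Fintype n] [CommSemiring R]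
    (A : Matrix m n R) {T : Set n} (hT : Submodule.span R ((fun j i => A i j) '' T) = ⊤)
    (y : m → R) : ∃ x, (∀ j ∉ T, x j = 0) ∧ A *ᵥ x = y := by
  obtain ⟨l, hlT, hly⟩ :=
    (Finsupp.mem_span_image_iff_linearCombination R).mp (hT ▸ Submodule.mem_top (x := y))
  refine ⟨l, fun j hj => Finsupp.notMem_support_iff.mp fun hl => hj (hlT hl), ?_⟩
  rw [← hly, Finsupp.linearCombination_apply, Finsupp.sum_fintype _ _ (by simp)]
  ext i
  simp [mulVec, dotProduct, Finset.sum_apply, mul_comm]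

theorem Matrix.surjective_restrict_mulVec {m n R : Type*} [Fintype n] [DecidableEq n]
    [CommRing R] (A : Matrix m n R) (S : Finset n)
    (hspan : Submodule.span R ((fun j i => A i j) '' {j | j ∉ S}) = ⊤) :
    Function.Surjective fun x : n → R => ((fun j : {x // x ∈ S} => x j), A *ᵥ x) := by
  rintro ⟨g, y⟩
  let x₀ : n → R := fun j => if h : j ∈ S then g ⟨j, h⟩ else 0
  obtain ⟨x₁, hx₁S, hx₁⟩ := A.exists_mulVec_eq_of_span_cols hspan (y - A *ᵥ x₀)
  refine ⟨x₀ + x₁, Prod.ext (funext fun j => ?_) ?_⟩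
  · simp [x₀, hx₁S j (not_not.mpr j.2)]
  · simp [mulVec_add, hx₁]

theorem stmt_3_general (ψ τ : ℕ)
    (A : Matrix (Fin ψ) (Fin τ) (ZMod 2)) (S : Finset (Fin τ))
    (hspan : Submodule.span (ZMod 2) ((fun j => fun i => A i j) '' {j | j ∉ S}) = ⊤) :
    (PMF.uniformOfFintype (Fin τ → ZMod 2)).map
        (fun Γ => ((fun j : {x // x ∈ S} => Γ j.1), A.mulVec Γ))
    = PMF.uniformOfFintype (({x // x ∈ S} → ZMod 2) × (Fin ψ → ZMod 2)) := by
  let F : (Fin τ → ZMod 2) →ₗ[ZMod 2] ({x // x ∈ S} → ZMod 2) × (Fin ψ → ZMod 2) :=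
    (LinearMap.funLeft (ZMod 2) (ZMod 2) Subtype.val).prod A.mulVecLin
  exact F.toAddMonoidHom.map_uniformOfFintype_of_surjective (A.surjective_restrict_mulVec S hspan)

/-- If the columns of `A` with indices outside `S` span `Fin ψ → ZMod 2`, then the
pushforward of the uniform distribution on `Γ : Fin τ → ZMod 2` under
`Γ ↦ (Γ|_S, A.mulVec Γ)` is uniform on `(S → ZMod 2) × (Fin ψ → ZMod 2)`. -/
theorem stmt_3 (ψ τ : ℕ) (hψ : 0 < ψ) (hτ : 0 < τ)
    (A : Matrix (Fin ψ) (Fin τ) (ZMod 2)) (S : Finset (Fin τ))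
    (hspan : Submodule.span (ZMod 2) ((fun j => fun i => A i j) '' {j | j ∉ S}) = ⊤) :
    (PMF.uniformOfFintype (Fin τ → ZMod 2)).map
        (fun Γ => ((fun j : {x // x ∈ S} => Γ j.1), A.mulVec Γ))
    = PMF.uniformOfFintype (({x // x ∈ S} → ZMod 2) × (Fin ψ → ZMod 2)) :=
  stmt_3_general ψ τ A S hspan
end

section
/- Let ψ ≥ 1 and n be natural numbers with 2n ≥ 9ψ. If x_1, …, x_n are drawn independently and uniformly at random from the vector space Fin ψ → ZMod 2, then the probability that the span of {x_1, …, x_n} is not the whole space Fin ψ → ZMod 2 is at most 2^{1−ψ}. -/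
/-!
If `x₁, …, xₙ` do not span `V`, they all lie in the kernel of some nonzero functional. A fixed
nonzero functional over `K` kills a uniform random tuple with probability `|K|⁻ⁿ`, and there are
fewer than `|V|` functionals, so the union bound gives `|V| / |K|ⁿ`; for `V = 𝔽₂^ψ` this is
`2^(ψ - n) ≤ 2^(1 - ψ)` as soon as `n + 1 ≥ 2ψ`.
-/

open scoped ENNReal

attribute [local instance] Classical.propDecidable

open Finset Module Submodule LinearMap

theorem Set.card_filter_forall_mem {M ι : Type*} [Fintype ι] [DecidableEq ι] [Fintype M]
    (s : Set M) :
    #{x : ι → M | ∀ i, x i ∈ s} = Nat.card s ^ Fintype.card ι := by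
  rw [← Fintype.card_subtype, ← Nat.card_eq_fintype_card,
    Nat.card_congr (Equiv.subtypePiEquivPi (p := fun _ v => v ∈ s)), Nat.card_fun,
    Nat.card_eq_fintype_card (α := ι)]

section
variable {K V : Type*} [Field K] [AddCommGroup V] [Module K V]

theorem Module.Dual.exists_ne_zero_forall_apply_eq_zero_of_span_ne_top {s : Set V}
    (hs : span K s ≠ ⊤) : ∃ φ : Dual K V, φ ≠ 0 ∧ ∀ v ∈ s, φ v = 0 := by
  obtain ⟨φ, hφ, hle⟩ := (span K s).exists_le_ker_of_lt_top (lt_top_iff_ne_top.2 hs)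
  exact ⟨φ, hφ, fun v hv => hle (subset_span hv)⟩

variable [FiniteDimensional K V]

theorem Module.Dual.natCard_ker_mul_natCard {φ : Dual K V} (hφ : φ ≠ 0) :
    Nat.card (ker φ) * Nat.card K = Nat.card V := by
  rw [natCard_eq_pow_finrank (K := K) (V := V), ← Dual.finrank_ker_add_one_of_ne_zero hφ,
    pow_succ, natCard_eq_pow_finrank (K := K)]

theorem Module.Dual.natCard_eq_natCard : Nat.card (Dual K V) = Nat.card V := by
  rw [natCard_eq_pow_finrank (K := K), natCard_eq_pow_finrank (K := K) (V := V),
    Subspace.dual_finrank_eq]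

theorem card_filter_span_ne_top_mul_le [Finite K] {ι : Type*} [Fintype ι] [DecidableEq ι]
    [Fintype V] :
    #{x : ι → V | span K (Set.range x) ≠ ⊤} * Nat.card K ^ Fintype.card ι ≤
      Nat.card V ^ (Fintype.card ι + 1) := by
  have : Fintype (Dual K V) := @Fintype.ofFinite _ (Module.finite_of_finite K)
  have hcover : ({x | span K (Set.range x) ≠ ⊤} : Finset (ι → V)) ⊆
      ({φ : Dual K V | φ ≠ 0} : Finset _).biUnion
        fun φ => ({x | ∀ i, x i ∈ (ker φ : Set V)} : Finset (ι → V)) := by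
    intro x hx
    obtain ⟨φ, hφ, hx⟩ :=
      Dual.exists_ne_zero_forall_apply_eq_zero_of_span_ne_top (mem_filter.1 hx).2
    simpa [hφ] using ⟨φ, hφ, fun i => hx _ ⟨i, rfl⟩⟩
  calc #{x : ι → V | span K (Set.range x) ≠ ⊤} * Nat.card K ^ Fintype.card ι
      ≤ (∑ φ ∈ {φ : Dual K V | φ ≠ 0}, #{x : ι → V | ∀ i, x i ∈ (ker φ : Set V)}) *
          Nat.card K ^ Fintype.card ι :=
        Nat.mul_le_mul_right _ ((card_le_card hcover).trans card_biUnion_le)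
    _ = ∑ φ ∈ {φ : Dual K V | φ ≠ 0}, Nat.card V ^ Fintype.card ι := by
        rw [sum_mul]
        refine sum_congr rfl fun φ hφ => ?_
        rw [Set.card_filter_forall_mem, ← mul_pow, SetLike.coe_sort_coe,
          Dual.natCard_ker_mul_natCard (mem_filter.1 hφ).2]
    _ ≤ Nat.card (Dual K V) * Nat.card V ^ Fintype.card ι := by
        rw [sum_const, smul_eq_mul]
        exact Nat.mul_le_mul_right _ ((card_filter_le _ _).trans_eq Nat.card_eq_fintype_card.symm)
    _ = Nat.card V ^ (Fintype.card ι + 1) := by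
        rw [Dual.natCard_eq_natCard, pow_succ']
end

theorem sum_uniformOfFintype_mul_ite_span_ne_top_le {K V ι : Type*} [Field K] [Finite K]
    [AddCommGroup V] [Module K V] [Fintype V] [Fintype ι] [DecidableEq ι] :
    ∑ x : ι → V, PMF.uniformOfFintype (ι → V) x * (if span K (Set.range x) ≠ ⊤ then 1 else 0) ≤
      (Nat.card V : ℝ≥0∞) / Nat.card K ^ Fintype.card ι := by
  have key : ((#{x : ι → V | span K (Set.range x) ≠ ⊤} * Nat.card K ^ Fintype.card ι : ℕ) :
      ℝ≥0∞) ≤ (Nat.card V ^ (Fintype.card ι + 1) : ℕ) := by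
    exact_mod_cast card_filter_span_ne_top_mul_le
  simp only [PMF.uniformOfFintype_apply, ← mul_sum, sum_boole, Fintype.card_fun]
  push_cast at key
  rw [← Nat.card_eq_fintype_card, mul_comm, ← div_eq_mul_inv]
  refine ENNReal.div_le_of_le_mul ?_
  rw [← ENNReal.mul_div_right_comm, ENNReal.le_div_iff_mul_le (by simp) (by simp)]
  simpa [pow_succ'] using key

theorem stmt_4_general (ψ n : ℕ) (hn : 9 * ψ ≤ 2 * n) :
    ∑ x : Fin n → (Fin ψ → ZMod 2),
      (PMF.uniformOfFintype (Fin n → (Fin ψ → ZMod 2))) x *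
        (if Submodule.span (ZMod 2) (Set.range x) ≠ ⊤ then 1 else 0)
    ≤ (2 : ℝ≥0∞) ^ ((1 : ℤ) - (ψ : ℤ)) := by
  refine (sum_uniformOfFintype_mul_ite_span_ne_top_le (K := ZMod 2)).trans ?_
  simp only [Nat.card_eq_fintype_card, Fintype.card_fun, Fintype.card_fin, ZMod.card]
  push_cast
  rw [div_eq_mul_inv, ← zpow_natCast, ← zpow_natCast,
    ← ENNReal.zpow_sub (by norm_num) (by norm_num)]
  exact ENNReal.zpow_le_of_le (by norm_num) (by omega)

/-- If `ψ ≥ 1`, `2n ≥ 9ψ` and `x₁, …, xₙ` are drawn independently and uniformly from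
`Fin ψ → ZMod 2`, the probability that they do not span the whole space is at most
`2 ^ (1 - ψ)`. -/
theorem stmt_4 (ψ n : ℕ) (hψ : 1 ≤ ψ) (hn : 9 * ψ ≤ 2 * n) :
    ∑ x : Fin n → (Fin ψ → ZMod 2),
      (PMF.uniformOfFintype (Fin n → (Fin ψ → ZMod 2))) x *
        (if Submodule.span (ZMod 2) (Set.range x) ≠ ⊤ then 1 else 0)
    ≤ (2 : ℝ≥0∞) ^ ((1 : ℤ) - (ψ : ℤ)) :=
  stmt_4_general ψ n hn
end

section
/- Let T be an even natural number with T ≥ 2, let C be a finite type, and let col : Fin T → C be a coloring with color class sizes a_c = |col⁻¹(c)| for c ∈ C. If π is drawn uniformly at random from the fixed-point-free involutions of Fin T, then the expected number of indices j ∈ Fin T with j < π(j) and col(j) ≠ col(π(j)) (i.e., the expected number of mismatched pairs of the pairing π) equals (1 / (2(T−1))) · Σ_{c ∈ C} a_c · (T − a_c). -/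
/-!
Double counting. Conjugating by the transposition `(k k')` shows that, for `j` fixed, the
fixed-point-free involutions with `π j = k` are equally many for every `k ≠ j`, so each
ordered pair `j ≠ k` is matched by exactly a `1 / (T - 1)` fraction of them. Summing over the
pairs `j < k` of different colours, the expectation is `1 / (T - 1)` times the number of such
pairs, which is half the number of ordered pairs of different colours, `∑_c a_c (T - a_c)`.
-/

open Finset Equiv

section Involutions

variable {α : Type*} [Fintype α] [DecidableEq α]

def fixedPointFreeInvolutions (α : Type*) [Fintype α] [DecidableEq α] : Finset (Perm α) :=
  univ.filter fun π => (∀ i, π (π i) = i) ∧ ∀ i, π i ≠ i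

theorem mem_fixedPointFreeInvolutions {π : Perm α} :
    π ∈ fixedPointFreeInvolutions α ↔ (∀ i, π (π i) = i) ∧ ∀ i, π i ≠ i := by
  simp [fixedPointFreeInvolutions]

theorem conj_mem_fixedPointFreeInvolutions {π : Perm α} (σ : Perm α)
    (hπ : π ∈ fixedPointFreeInvolutions α) : σ * π * σ⁻¹ ∈ fixedPointFreeInvolutions α := by
  rw [mem_fixedPointFreeInvolutions] at hπ ⊢
  refine ⟨fun i => by simp [hπ.1], fun i h => hπ.2 (σ⁻¹ i) (σ.injective ?_)⟩
  simpa using h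

theorem card_filter_apply_eq_of_ne {j k k' : α} (hk : k ≠ j) (hk' : k' ≠ j) :
    #{π ∈ fixedPointFreeInvolutions α | π j = k} = #{π ∈ fixedPointFreeInvolutions α | π j = k'} := by
  set σ := swap k k'
  refine card_equiv (MulAut.conj σ).toEquiv fun π => ?_
  have hσj : σ⁻¹ j = j := by simp [σ, swap_apply_of_ne_of_ne hk.symm hk'.symm]
  simp only [mem_filter, MulEquiv.toEquiv_eq_coe, MulEquiv.coe_toEquiv, MulAut.conj_apply,
    Perm.mul_apply, hσj]
  constructor
  · rintro ⟨hπ, rfl⟩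
    exact ⟨conj_mem_fixedPointFreeInvolutions σ hπ, swap_apply_left _ _⟩
  · rintro ⟨hπ, h⟩
    refine ⟨by simpa [mul_assoc] using conj_mem_fixedPointFreeInvolutions σ⁻¹ hπ, ?_⟩
    simpa [σ, swap_apply_eq_iff] using h

theorem card_sub_one_mul_card_filter_apply_eq {j k : α} (hk : k ≠ j) :
    (Fintype.card α - 1) * #{π ∈ fixedPointFreeInvolutions α | π j = k}
      = #(fixedPointFreeInvolutions α) := by
  have hj : #{π ∈ fixedPointFreeInvolutions α | π j = j} = 0 := by
    simp only [card_eq_zero, filter_eq_empty_iff, mem_fixedPointFreeInvolutions]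
    exact fun π hπ => hπ.2 j
  rw [card_eq_sum_card_fiberwise (s := fixedPointFreeInvolutions α) (f := fun π => π j)
      (t := univ) fun π _ => mem_univ _,
    ← sum_erase_add _ _ (mem_univ j), hj, add_zero,
    sum_congr rfl fun k' hk' => card_filter_apply_eq_of_ne (ne_of_mem_erase hk') hk,
    sum_const, card_erase_of_mem (mem_univ j), card_univ, smul_eq_mul]

theorem card_sub_one_mul_sum_card_filter_apply (R : α → α → Prop) [DecidableRel R]
    (hR : ∀ j k, R j k → j ≠ k) :
    (Fintype.card α - 1) * ∑ π ∈ fixedPointFreeInvolutions α, #{j | R j (π j)}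
      = #{p : α × α | R p.1 p.2} * #(fixedPointFreeInvolutions α) := by
  have hgraph (π : Perm α) :
      #{j | R j (π j)} = #{p ∈ ({p : α × α | R p.1 p.2} : Finset _) | π p.1 = p.2} := by
    refine card_nbij' (fun j => (j, π j)) Prod.fst (fun j => by simp) ?_ (fun j _ => rfl) ?_ <;>
      rintro ⟨j, k⟩ <;> simp +contextual
  simp_rw [hgraph]
  calc (Fintype.card α - 1) * ∑ π ∈ fixedPointFreeInvolutions α,
        #{p ∈ ({p : α × α | R p.1 p.2} : Finset _) | π p.1 = p.2}
      = ∑ p : α × α with R p.1 p.2,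
          (Fintype.card α - 1) * #{π ∈ fixedPointFreeInvolutions α | π p.1 = p.2} := by
        rw [← mul_sum]
        exact congrArg _ (sum_card_bipartiteAbove_eq_sum_card_bipartiteBelow _)
    _ = #{p : α × α | R p.1 p.2} * #(fixedPointFreeInvolutions α) := by
        rw [sum_congr rfl fun p hp => card_sub_one_mul_card_filter_apply_eq
          (hR p.1 p.2 (mem_filter.1 hp).2).symm, sum_const, smul_eq_mul]

end Involutions

theorem addRight_mem_fixedPointFreeInvolutions {G : Type*} [AddGroup G] [Fintype G]
    [DecidableEq G] {k : G} (hk : k ≠ 0) (hkk : k + k = 0) :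
    Equiv.addRight k ∈ fixedPointFreeInvolutions G := by
  simp [mem_fixedPointFreeInvolutions, add_assoc, hkk, hk]

theorem fixedPointFreeInvolutions_fin_nonempty {T : ℕ} (hT : Even T) :
    (fixedPointFreeInvolutions (Fin T)).Nonempty := by
  obtain ⟨m, rfl⟩ := hT
  obtain rfl | hm := m.eq_zero_or_pos
  · exact ⟨1, by simp [mem_fixedPointFreeInvolutions]⟩
  have : NeZero (m + m) := ⟨by omega⟩
  refine ⟨_, addRight_mem_fixedPointFreeInvolutions (k := ⟨m, by omega⟩) ?_ ?_⟩
  · simp [Fin.ext_iff, hm.ne']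
  · simp [Fin.ext_iff, Fin.val_add]

theorem two_mul_card_filter_lt_and {α : Type*} [Fintype α] [LinearOrder α]
    (S : α → α → Prop) [DecidableRel S] (hSsymm : ∀ a b, S a b → S b a) (hSirrefl : ∀ a, ¬ S a a) :
    2 * #{p : α × α | p.1 < p.2 ∧ S p.1 p.2} = #{p : α × α | S p.1 p.2} := by
  have hswap : #{p : α × α | p.2 < p.1 ∧ S p.1 p.2} = #{p : α × α | p.1 < p.2 ∧ S p.1 p.2} :=
    card_equiv (Equiv.prodComm α α) fun p => by
      simpa using fun _ => ⟨hSsymm _ _, hSsymm _ _⟩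
  have hsplit : univ.filter (fun p : α × α => S p.1 p.2)
      = univ.filter (fun p : α × α => p.1 < p.2 ∧ S p.1 p.2)
        ∪ univ.filter (fun p : α × α => p.2 < p.1 ∧ S p.1 p.2) := by
    ext ⟨a, b⟩
    simp only [mem_filter, mem_univ, true_and, mem_union, ← or_and_right]
    exact ⟨fun h => ⟨lt_or_gt_of_ne fun hab => hSirrefl a (hab ▸ h), h⟩, And.right⟩
  rw [hsplit, card_union_of_disjoint, hswap, two_mul]
  exact disjoint_filter.2 fun p _ h h' => lt_asymm h.1 h'.1

theorem card_filter_apply_ne_eq_sum {α β R : Type*} [Fintype α] [Fintype β] [DecidableEq β]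
    [CommRing R] (f : α → β) :
    (#{p : α × α | f p.1 ≠ f p.2} : R)
      = ∑ c, (#{j | f j = c} : R) * (Fintype.card α - #{j | f j = c}) := by
  have hrow (j : α) : (#{k | f j ≠ f k} : R) = Fintype.card α - #{k | f k = f j} := by
    rw [eq_sub_iff_add_eq, ← Nat.cast_add, ← card_univ,
      ← card_filter_add_card_filter_not (s := univ) fun k => f k = f j, add_comm]
    simp only [eq_comm, ne_eq]
  calc (#{p : α × α | f p.1 ≠ f p.2} : R)
      = ∑ j, (#{k | f j ≠ f k} : R) := by
        simp [card_filter, Fintype.sum_prod_type]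
    _ = ∑ j, ((Fintype.card α : R) - #{k | f k = f j}) := sum_congr rfl fun j _ => hrow j
    _ = ∑ c, (#{j | f j = c} : R) * (Fintype.card α - #{j | f j = c}) := by
        rw [← sum_fiberwise univ f]
        refine sum_congr rfl fun c _ => ?_
        rw [sum_congr rfl fun j hj => by rw [(mem_filter.1 hj).2], sum_const, nsmul_eq_mul]

/-- For a coloring `col : Fin T → C` with color class sizes `a_c` and a uniformly random
fixed-point-free involution `π` of `Fin T` (`T` even, `T ≥ 2`), the expected number of
mismatched pairs (indices `j` with `j < π j` and `col j ≠ col (π j)`) equals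
`(1 / (2 (T - 1))) * ∑_c a_c (T - a_c)`. -/
theorem stmt_6 (T : ℕ) (hT2 : 2 ≤ T) (hTe : Even T) (C : Type*) [Fintype C] [DecidableEq C]
    (col : Fin T → C) :
    (∑ π ∈ Finset.univ.filter
        (fun π : Equiv.Perm (Fin T) => (∀ i, π (π i) = i) ∧ (∀ i, π i ≠ i)),
        ((Finset.univ.filter (fun j : Fin T => j < π j ∧ col j ≠ col (π j))).card : ℝ)) /
      ((Finset.univ.filter
          (fun π : Equiv.Perm (Fin T) => (∀ i, π (π i) = i) ∧ (∀ i, π i ≠ i))).card : ℝ)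
    = (1 / (2 * ((T : ℝ) - 1))) *
        ∑ c : C, ((Finset.univ.filter (fun j : Fin T => col j = c)).card : ℝ) *
          ((T : ℝ) - ((Finset.univ.filter (fun j : Fin T => col j = c)).card : ℝ)) := by
  -- not `rfl`: the statement decides `∀ i : Fin T` by `Nat.decidableForallFin`
  rw [show univ.filter (fun π : Perm (Fin T) => (∀ i, π (π i) = i) ∧ ∀ i, π i ≠ i)
    = fixedPointFreeInvolutions (Fin T) by ext; simp [mem_fixedPointFreeInvolutions]]
  have hF : (#(fixedPointFreeInvolutions (Fin T)) : ℝ) ≠ 0 := by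
    exact_mod_cast (fixedPointFreeInvolutions_fin_nonempty hTe).card_pos.ne'
  have hT : (T : ℝ) - 1 ≠ 0 := by
    have : (2 : ℝ) ≤ T := by exact_mod_cast hT2
    linarith
  have hpairs := card_sub_one_mul_sum_card_filter_apply (fun j k => j < k ∧ col j ≠ col k)
    fun j k h => h.1.ne
  have hhalf := two_mul_card_filter_lt_and (fun j k => col j ≠ col k) (fun _ _ => Ne.symm)
    fun _ h => h rfl
  have hcol := card_filter_apply_ne_eq_sum (R := ℝ) col
  rw [Fintype.card_fin] at hpairs hcol
  have hpairsR := congrArg (Nat.cast : ℕ → ℝ) hpairs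
  have hhalfR := congrArg (Nat.cast : ℕ → ℝ) hhalf
  push_cast [Nat.cast_sub (by omega : 1 ≤ T)] at hpairsR hhalfR
  rw [← hcol, ← hhalfR]
  field_simp
  linarith
end

section
/- Let T be an even natural number and let a_0, a_1, …, a_k be natural numbers with Σ_{i=0}^{k} a_i = T and a_0 ≥ a_i for every i. Then a_0 + Σ_{i=1}^{k} a_i² ≤ T/2 + (T/2)². -/
/-!
Since `aᵢ ≤ a₀`, we get `∑ aᵢ² ≤ a₀ ∑ aᵢ = a₀ (T - a₀)`. Writing `T = 2m`,
`m + m² - (a₀ + a₀ (2m - a₀)) = (m - a₀)(m - a₀ + 1)`, a product of two consecutive integers,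
hence nonnegative.
-/

theorem Finset.sum_sq_le_mul_sum_of_le {ι : Type*} (s : Finset ι) (a : ι → ℕ) {M : ℕ}
    (h : ∀ i ∈ s, a i ≤ M) : ∑ i ∈ s, a i ^ 2 ≤ M * ∑ i ∈ s, a i := by
  rw [Finset.mul_sum]
  exact Finset.sum_le_sum fun i hi => by
    rw [sq]
    exact Nat.mul_le_mul_right _ (h i hi)

theorem Nat.add_mul_le_of_add_eq_add_self {x y m : ℕ} (h : x + y = m + m) :
    x + x * y ≤ m + m ^ 2 := by
  have hy : (y : ℤ) = 2 * m - x := by omega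
  have hconsec : 0 ≤ ((m : ℤ) - x) * ((m : ℤ) - x + 1) := by
    rcases le_or_gt 0 ((m : ℤ) - x) with hpos | hneg
    · exact mul_nonneg hpos (by linarith)
    · nlinarith
  zify
  rw [hy]
  linarith

/-- If `T` is even, `a₀ + a₁ + ⋯ + a_k = T` and `a₀` is maximal among the `aᵢ`, then
`a₀ + ∑_{i=1}^{k} aᵢ² ≤ T/2 + (T/2)²`. -/
theorem stmt_7 (T k : ℕ) (hT : Even T) (a₀ : ℕ) (a : Fin k → ℕ)
    (hsum : a₀ + ∑ i, a i = T) (hmax : ∀ i, a i ≤ a₀) :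
    a₀ + ∑ i, (a i) ^ 2 ≤ T / 2 + (T / 2) ^ 2 := by
  obtain ⟨m, rfl⟩ := hT
  rw [show (m + m) / 2 = m by omega]
  calc a₀ + ∑ i, a i ^ 2 ≤ a₀ + a₀ * ∑ i, a i :=
        Nat.add_le_add_left (Finset.univ.sum_sq_le_mul_sum_of_le a fun i _ => hmax i) _
    _ ≤ m + m ^ 2 := Nat.add_mul_le_of_add_eq_add_self hsum
end

section
/- Let τ ≥ 1 be a natural number and let a_0, a_1, …, a_k be natural numbers with Σ_{i=0}^{k} a_i = 2τ and a_0 ≥ a_i for every i. Then, as real numbers, (1/2)·a_0 + (1/(2(2τ−1))) · Σ_{i=1}^{k} a_i·(2τ − a_i) > (3/4)·τ. -/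
/-!
Since every `aᵢ ≤ a₀`, each term `aᵢ (2τ - aᵢ)` is at least `aᵢ (2τ - a₀)`, so the sum is at
least `(2τ - a₀)²`. The claim then reduces to a quadratic inequality in `a₀`, which is
`(a₀ - τ - 1/2)² + τ/2 - 1/4 > 0` after clearing the denominator `2(2τ - 1)`.
-/

open Finset

theorem Finset.sum_mul_sub_le_sum_mul_sub_self {ι R : Type*} [CommRing R] [PartialOrder R]
    [IsOrderedRing R] (s : Finset ι) (f : ι → R) (c M : R)
    (hf₀ : ∀ i ∈ s, 0 ≤ f i) (hfM : ∀ i ∈ s, f i ≤ M) :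
    (∑ i ∈ s, f i) * (c - M) ≤ ∑ i ∈ s, f i * (c - f i) := by
  rw [sum_mul]
  exact sum_le_sum fun i hi =>
    mul_le_mul_of_nonneg_left (sub_le_sub_left (hfM i hi) c) (hf₀ i hi)

theorem three_quarters_mul_lt_half_add_sq_div {t A : ℝ} (ht : 1 / 2 < t) :
    3 / 4 * t < 1 / 2 * A + 1 / (2 * (2 * t - 1)) * (2 * t - A) ^ 2 := by
  have hd : 0 < 2 * (2 * t - 1) := by linarith
  rw [← sub_lt_iff_lt_add', one_div_mul_eq_div (2 * (2 * t - 1)), lt_div_iff₀ hd]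
  nlinarith [sq_nonneg (A - t - 1 / 2)]

/-- If `τ ≥ 1`, `a₀ + a₁ + ⋯ + a_k = 2τ` and `a₀` is maximal among the `aᵢ`, then, over
the reals, `(1/2) a₀ + (1/(2(2τ-1))) ∑_{i=1}^{k} aᵢ (2τ - aᵢ) > (3/4) τ`. -/
theorem stmt_8 (τ k : ℕ) (hτ : 1 ≤ τ) (a₀ : ℕ) (a : Fin k → ℕ)
    (hsum : a₀ + ∑ i, a i = 2 * τ) (hmax : ∀ i, a i ≤ a₀) :
    (3 / 4 : ℝ) * τ <
      (1 / 2 : ℝ) * a₀ +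
        (1 / (2 * (2 * (τ : ℝ) - 1))) * ∑ i, (a i : ℝ) * (2 * (τ : ℝ) - (a i : ℝ)) := by
  have ht : (1 : ℝ) ≤ τ := by exact_mod_cast hτ
  have hrest : ∑ i, (a i : ℝ) = 2 * τ - a₀ := by
    rw [eq_sub_iff_add_eq', ← Nat.cast_sum]
    exact_mod_cast hsum
  have hsq : (2 * (τ : ℝ) - a₀) ^ 2 ≤ ∑ i, (a i : ℝ) * (2 * (τ : ℝ) - (a i : ℝ)) := by
    have h := sum_mul_sub_le_sum_mul_sub_self univ (fun i => (a i : ℝ)) (2 * τ) a₀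
      (fun i _ => Nat.cast_nonneg _) (fun i _ => by exact_mod_cast hmax i)
    rwa [hrest, ← sq] at h
  have hc : (0 : ℝ) ≤ 1 / (2 * (2 * (τ : ℝ) - 1)) := by
    have : (0 : ℝ) < 2 * (2 * (τ : ℝ) - 1) := by linarith
    positivity
  calc (3 / 4 : ℝ) * τ
      < 1 / 2 * a₀ + 1 / (2 * (2 * (τ : ℝ) - 1)) * (2 * τ - a₀) ^ 2 :=
        three_quarters_mul_lt_half_add_sq_div (by linarith)
    _ ≤ _ := by gcongr
end

section
/- Let B, ℓ ≥ 1 be natural numbers and consider a uniformly random assignment of Bℓ balls into ℓ buckets of exactly B balls each, i.e., a bijection drawn uniformly from the equivalences Fin (Bℓ) ≃ Fin ℓ × Fin B, where the first coordinate is the bucket. For any fixed set S of exactly B balls and any fixed bucket i ∈ Fin ℓ, the probability that every ball of S is assigned to bucket i equals 1 / (Bℓ choose B). -/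
/-! Bucket `i` holds exactly `B = #S` balls, so an assignment puts all of `S` into bucket `i`
iff it maps `S` onto that bucket. Such assignments are pairs of bijections `S ≃ bucket i` and
`Sᶜ ≃ (bucket i)ᶜ`, hence there are `B! (Bℓ - B)!` of them among the `(Bℓ)!` assignments. -/

open scoped Nat

namespace Equiv

variable {α β : Type*}

def subtypePreservingEquivProd (p : α → Prop) (q : β → Prop) [DecidablePred p] [DecidablePred q] :
    {e : α ≃ β // ∀ a, p a ↔ q (e a)} ≃
      ({a // p a} ≃ {b // q b}) × ({a // ¬p a} ≃ {b // ¬q b}) where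
  toFun e := (e.1.subtypeEquiv e.2, e.1.subtypeEquiv fun a => not_congr (e.2 a))
  invFun fg := ⟨(sumCompl p).symm.trans ((fg.1.sumCongr fg.2).trans (sumCompl q)), fun a => by
    by_cases h : p a <;>
      simp [h, sumCompl_symm_apply_of_pos, sumCompl_symm_apply_of_neg,
        (fg.1 ⟨a, _⟩).2, (fg.2 ⟨a, _⟩).2]⟩
  left_inv := by
    rintro ⟨e, _⟩
    ext a
    by_cases h : p a
    · simp [sumCompl_symm_apply_of_pos (p := p) h]
    · simp [sumCompl_symm_apply_of_neg (p := p) h]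
  right_inv := by
    rintro ⟨f, g⟩
    ext a
    · simp [sumCompl_symm_apply_of_pos (p := p) a.2]
    · simp [sumCompl_symm_apply_of_neg (p := p) a.2]

end Equiv

namespace Fintype

variable {α β : Type*} [Fintype α] [Fintype β]

theorem card_subtype_fst_eq [DecidableEq α] (a : α) : card {y : α × β // y.1 = a} = card β :=
  card_congr ⟨fun y => y.1.2, fun b => ⟨(a, b), rfl⟩, fun ⟨⟨_, _⟩, h⟩ => by subst h; rfl,
    fun _ => rfl⟩

theorem card_subtype_preserving_equiv
    (p : α → Prop) (q : β → Prop) [DecidablePred p] [DecidablePred q]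
    [Fintype {a // p a}] [Fintype {b // q b}] [Fintype {e : α ≃ β // ∀ a, p a ↔ q (e a)}]
    (hpq : card {a // p a} = card {b // q b}) (hαβ : card α = card β) :
    card {e : α ≃ β // ∀ a, p a ↔ q (e a)} = (card {a // p a})! * (card α - card {a // p a})! := by
  classical
  have hcompl : card {a // ¬p a} = card {b // ¬q b} := by
    rw [card_subtype_compl, card_subtype_compl, hpq, hαβ]
  rw [card_congr (Equiv.subtypePreservingEquivProd p q), card_prod,
    card_equiv (equivOfCardEq hpq), card_equiv (equivOfCardEq hcompl), card_subtype_compl]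

end Fintype

theorem Finset.forall_mem_imp_iff_of_card_eq {α β : Type*} [Fintype β] {S : Finset α}
    {q : β → Prop} [DecidablePred q] (e : α ≃ β) (hS : Fintype.card {b // q b} = S.card) :
    (∀ a ∈ S, q (e a)) ↔ ∀ a, a ∈ S ↔ q (e a) := by
  refine ⟨fun h a => ⟨h a, fun hqa => ?_⟩, fun h a => (h a).1⟩
  have himage : S.map e.toEmbedding = univ.filter q := by
    refine eq_of_subset_of_card_le (fun b hb => ?_) ?_
    · obtain ⟨a, ha, rfl⟩ := mem_map.mp hb
      simpa using h a ha
    · rw [card_map, ← hS, Fintype.card_subtype]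
  obtain ⟨a', ha', hea'⟩ := mem_map.mp (himage ▸ mem_filter.mpr ⟨mem_univ (e a), hqa⟩)
  rwa [← e.injective hea']

theorem stmt_9_general (B ℓ : ℕ)
    (S : Finset (Fin (B * ℓ))) (hS : S.card = B) (i : Fin ℓ) :
    ((Finset.univ.filter
          (fun e : Fin (B * ℓ) ≃ Fin ℓ × Fin B => ∀ j ∈ S, (e j).1 = i)).card : ℝ) /
        (Fintype.card (Fin (B * ℓ) ≃ Fin ℓ × Fin B) : ℝ)
    = 1 / (Nat.choose (B * ℓ) B : ℝ) := by
  classical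
  have hbucket : Fintype.card {y : Fin ℓ × Fin B // y.1 = i} = B := by
    rw [Fintype.card_subtype_fst_eq, Fintype.card_fin]
  have hsize : Fintype.card (Fin (B * ℓ)) = Fintype.card (Fin ℓ × Fin B) := by simp [mul_comm]
  have hBℓ : B ≤ B * ℓ := by simpa [hS] using S.card_le_univ
  have hS' : Fintype.card {j // j ∈ S} = B := by rw [Fintype.card_coe, hS]
  have hfavourable : (Finset.univ.filter
      (fun e : Fin (B * ℓ) ≃ Fin ℓ × Fin B => ∀ j ∈ S, (e j).1 = i)).card = B ! * (B * ℓ - B)! := by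
    rw [Finset.filter_congr fun e _ =>
        Finset.forall_mem_imp_iff_of_card_eq e (hbucket.trans hS.symm),
      ← Fintype.card_subtype, Fintype.card_subtype_preserving_equiv (· ∈ S)
        (fun y : Fin ℓ × Fin B => y.1 = i) (hS'.trans hbucket.symm) hsize, hS', Fintype.card_fin]
  rw [hfavourable, Fintype.card_equiv (Fintype.equivOfCardEq hsize), Fintype.card_fin,
    Nat.cast_choose ℝ hBℓ, one_div_div, Nat.cast_mul]

/-- Throwing `B·ℓ` balls into `ℓ` buckets of exactly `B` balls each via a uniformly random
bijection `Fin (B·ℓ) ≃ Fin ℓ × Fin B` (first coordinate the bucket): for any fixed set `S`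
of exactly `B` balls and any fixed bucket `i`, the probability that every ball of `S` lands
in bucket `i` is `1 / (B·ℓ choose B)`. -/
theorem stmt_9 (B ℓ : ℕ) (hB : 1 ≤ B) (hℓ : 1 ≤ ℓ)
    (S : Finset (Fin (B * ℓ))) (hS : S.card = B) (i : Fin ℓ) :
    ((Finset.univ.filter
          (fun e : Fin (B * ℓ) ≃ Fin ℓ × Fin B => ∀ j ∈ S, (e j).1 = i)).card : ℝ) /
        (Fintype.card (Fin (B * ℓ) ≃ Fin ℓ × Fin B) : ℝ)
    = 1 / (Nat.choose (B * ℓ) B : ℝ) :=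
  stmt_9_general B ℓ S hS i
end

section
/- Let B, ℓ ≥ 1 be natural numbers and consider a uniformly random assignment of Bℓ balls into ℓ buckets of exactly B balls each (a bijection drawn uniformly from Fin (Bℓ) ≃ Fin ℓ × Fin B, the first coordinate being the bucket). Let Γ be a fixed subset of the balls with |Γ| = γ (the 'leaky' balls). Then the probability that there exists a bucket all of whose B balls belong to Γ is at most (γ choose B) · ℓ / (Bℓ choose B). -/
/-!
For a fixed bucket `i`, the set of balls a uniform assignment `e` puts into `i` is a uniformly
distributed `B`-subset: precomposing `e` with a permutation `σ` moves that set by `σ`, and the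
permutations act transitively on subsets of a given size, so all fibres of `e ↦ e⁻¹(bucket i)`
over `B`-subsets have the same size. Hence bucket `i` lies inside `Γ` with probability exactly
`(γ choose B) / (Bℓ choose B)`, and a union bound over the `ℓ` buckets gives the claim.
-/

open Finset Equiv

open scoped Pointwise

variable {α β : Type*}

theorem Equiv.card_filter_mem_preimage [Fintype α] [DecidableEq β] (e : α ≃ β) (t : Finset β) :
    #{a | e a ∈ t} = #t := by
  rw [← card_map e.toEmbedding]
  congr 1
  ext b
  simp

variable [DecidableEq α]

theorem Finset.exists_perm_smul_eq_of_card_eq {s t : Finset α} (h : #s = #t) :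
    ∃ σ : Perm α, σ • s = t := by
  have := Set.powersetCard.isPretransitive (α := α) (n := #t)
  obtain ⟨σ, hσ⟩ := MulAction.exists_smul_eq (Perm α)
    (⟨s, h⟩ : Set.powersetCard α #t) ⟨t, rfl⟩
  exact ⟨σ, by simpa using congrArg Subtype.val hσ⟩

variable [Fintype α] [DecidableEq β]

theorem Equiv.filter_trans_mem_eq_smul (σ : Perm α) (e : α ≃ β) (t : Finset β) :
    ({a | (σ.symm.trans e) a ∈ t} : Finset α) = σ • ({a | e a ∈ t} : Finset α) := by
  ext a
  rw [← inv_smul_mem_iff, mem_filter_univ, mem_filter_univ, Perm.smul_def, Perm.inv_def,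
    trans_apply]

variable [Fintype β]

theorem card_equiv_filter_preimage_eq_of_card_eq (t : Finset β) {s s' : Finset α}
    (h : #s = #s') :
    #{e : α ≃ β | ({a | e a ∈ t} : Finset α) = s} =
      #{e : α ≃ β | ({a | e a ∈ t} : Finset α) = s'} := by
  obtain ⟨σ, rfl⟩ := exists_perm_smul_eq_of_card_eq h
  refine card_equiv (equivCongr σ (Equiv.refl β)) fun e => ?_
  rw [mem_filter_univ, mem_filter_univ,
    show equivCongr σ (Equiv.refl β) e = σ.symm.trans e from rfl, filter_trans_mem_eq_smul,
    smul_left_cancel_iff]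

theorem card_equiv_filter_preimage_subset_mul_choose (t : Finset β) (Γ : Finset α) :
    #{e : α ≃ β | ({a | e a ∈ t} : Finset α) ⊆ Γ} * (Fintype.card α).choose #t =
      (#Γ).choose #t * Fintype.card (α ≃ β) := by
  set F : Finset α → ℕ := fun s => #{e : α ≃ β | ({a | e a ∈ t} : Finset α) = s}
  have hsubset :
      #{e : α ≃ β | ({a | e a ∈ t} : Finset α) ⊆ Γ} = ∑ s ∈ Γ.powersetCard #t, F s := by
    rw [sum_card_fiberwise_eq_card_filter]
    simp [mem_powersetCard, card_filter_mem_preimage]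
  have huniv : Fintype.card (α ≃ β) = ∑ s ∈ univ.powersetCard #t, F s := by
    rw [sum_card_fiberwise_eq_card_filter]
    simp [mem_powersetCard, card_filter_mem_preimage]
  have hF : ∀ s ∈ Γ.powersetCard #t, ∀ s' ∈ univ.powersetCard #t, F s = F s' :=
    fun s hs s' hs' => card_equiv_filter_preimage_eq_of_card_eq t
      ((mem_powersetCard.1 hs).2.trans (mem_powersetCard.1 hs').2.symm)
  calc #{e : α ≃ β | ({a | e a ∈ t} : Finset α) ⊆ Γ} * (Fintype.card α).choose #t
      = ∑ s ∈ Γ.powersetCard #t, ∑ s' ∈ univ.powersetCard #t, F s := by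
        rw [hsubset, sum_mul]
        refine sum_congr rfl fun s _ => ?_
        rw [sum_const, card_powersetCard, card_univ, smul_eq_mul, mul_comm]
    _ = ∑ s ∈ Γ.powersetCard #t, ∑ s' ∈ univ.powersetCard #t, F s' :=
        sum_congr rfl fun s hs => sum_congr rfl (hF s hs)
    _ = (#Γ).choose #t * Fintype.card (α ≃ β) := by
        simp [huniv]

theorem card_equiv_prod_fiber_subset_mul_choose {ι κ : Type*} [Fintype ι] [DecidableEq ι]
    [Fintype κ] [DecidableEq κ] (Γ : Finset α) (i : ι) :
    #{e : α ≃ ι × κ | ∀ a, (e a).1 = i → a ∈ Γ} * (Fintype.card α).choose (Fintype.card κ) =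
      (#Γ).choose (Fintype.card κ) * Fintype.card (α ≃ ι × κ) := by
  have h := card_equiv_filter_preimage_subset_mul_choose ({i} ×ˢ (univ : Finset κ)) Γ
  have hmem (p : ι × κ) : p ∈ {i} ×ˢ univ ↔ p.1 = i := by
    simp only [mem_product, mem_singleton, mem_univ, and_true]
  rw [card_product, card_singleton, card_univ, one_mul] at h
  simpa only [subset_iff, mem_filter_univ, hmem] using h

theorem Finset.card_filter_exists_le_sum {ι κ : Type*} [Fintype ι] [DecidableEq κ]
    (s : Finset κ) (p : ι → κ → Prop) [∀ i, DecidablePred (p i)]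
    [DecidablePred fun x => ∃ i, p i x] :
    #{x ∈ s | ∃ i, p i x} ≤ ∑ i, #{x ∈ s | p i x} :=
  calc #{x ∈ s | ∃ i, p i x} ≤ #(univ.biUnion fun i => {x ∈ s | p i x}) :=
        card_le_card fun x => by simp
    _ ≤ ∑ i, #{x ∈ s | p i x} := card_biUnion_le

theorem stmt_10_general (B ℓ γ : ℕ) (hℓ : 1 ≤ ℓ)
    (Γ : Finset (Fin (B * ℓ))) (hΓ : Γ.card = γ) :
    ((Finset.univ.filter
          (fun e : Fin (B * ℓ) ≃ Fin ℓ × Fin B =>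
            ∃ i : Fin ℓ, ∀ j : Fin (B * ℓ), (e j).1 = i → j ∈ Γ)).card : ℝ) /
        (Fintype.card (Fin (B * ℓ) ≃ Fin ℓ × Fin B) : ℝ)
    ≤ (Nat.choose γ B : ℝ) * (ℓ : ℝ) / (Nat.choose (B * ℓ) B : ℝ) := by
  set N := Fintype.card (Fin (B * ℓ) ≃ Fin ℓ × Fin B)
  have hbucket (i : Fin ℓ) : #{e : Fin (B * ℓ) ≃ Fin ℓ × Fin B | ∀ j, (e j).1 = i → j ∈ Γ} *
      (B * ℓ).choose B = γ.choose B * N := by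
    have h := card_equiv_prod_fiber_subset_mul_choose (κ := Fin B) Γ i
    rw [Fintype.card_fin, Fintype.card_fin, hΓ] at h
    -- `∀ j : Fin _` is decided by `Nat.decidableForallFin` here but by
    -- `Fintype.decidableForallFintype` in the general lemma.
    convert h using 4
  have hcount : #{e : Fin (B * ℓ) ≃ Fin ℓ × Fin B | ∃ i, ∀ j, (e j).1 = i → j ∈ Γ} *
      (B * ℓ).choose B ≤ γ.choose B * ℓ * N :=
    calc _ ≤ (∑ i : Fin ℓ, #{e : Fin (B * ℓ) ≃ Fin ℓ × Fin B | ∀ j, (e j).1 = i → j ∈ Γ}) *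
          (B * ℓ).choose B := Nat.mul_le_mul_right _ (card_filter_exists_le_sum _ _)
      _ = γ.choose B * ℓ * N := by
        simp only [sum_mul, hbucket, sum_const, card_univ, Fintype.card_fin, smul_eq_mul]
        ring
  have hchoose : 0 < (B * ℓ).choose B := Nat.choose_pos (Nat.le_mul_of_pos_right B hℓ)
  have hN : 0 < N := Fintype.card_pos_iff.2 ⟨Fintype.equivOfCardEq (by simp [mul_comm])⟩
  rw [div_le_div_iff₀ (by positivity) (by positivity)]
  exact_mod_cast hcount

/-- Throwing `B·ℓ` balls into `ℓ` buckets of exactly `B` balls each via a uniformly random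
bijection `Fin (B·ℓ) ≃ Fin ℓ × Fin B` (first coordinate the bucket): if `Γ` is a fixed set
of `γ` leaky balls, the probability that some bucket consists entirely of balls from `Γ`
is at most `(γ choose B) · ℓ / (B·ℓ choose B)`. -/
theorem stmt_10 (B ℓ γ : ℕ) (hB : 1 ≤ B) (hℓ : 1 ≤ ℓ)
    (Γ : Finset (Fin (B * ℓ))) (hΓ : Γ.card = γ) :
    ((Finset.univ.filter
          (fun e : Fin (B * ℓ) ≃ Fin ℓ × Fin B =>
            ∃ i : Fin ℓ, ∀ j : Fin (B * ℓ), (e j).1 = i → j ∈ Γ)).card : ℝ) /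
        (Fintype.card (Fin (B * ℓ) ≃ Fin ℓ × Fin B) : ℝ)
    ≤ (Nat.choose γ B : ℝ) * (ℓ : ℝ) / (Nat.choose (B * ℓ) B : ℝ) :=
  stmt_10_general B ℓ γ hℓ Γ hΓ
end

section
/- For all natural numbers B ≥ 1 and γ, the real number 2^{−γ} · (γ choose B) is at most 2^{1−2B} · ((2B−1) choose B); that is, the function γ ↦ 2^{−γ}·(γ choose B) attains its maximum at γ = 2B − 1. -/
/-! Consecutive terms of `n ↦ 2⁻ⁿ * (n choose k)` have ratio `(n + 1) / (2 * (n + 1 - k))`,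
which is at least `1` exactly when `n + 1 ≤ 2 * k`: the sequence rises up to `n = 2 * k - 1`
and falls after it. On the level of binomial coefficients this is Pascal's rule combined with
`(n choose (k + 1)) * (k + 1) = (n choose k) * (n - k)`. -/

namespace Nat

theorem two_mul_choose_le_choose_succ {n k : ℕ} (h : n + 1 ≤ 2 * k) :
    2 * n.choose k ≤ (n + 1).choose k := by
  obtain _ | j := k
  · omega
  have hdec : n.choose (j + 1) ≤ n.choose j := by
    refine Nat.le_of_mul_le_mul_right ?_ j.succ_pos
    rw [choose_succ_right_eq]
    exact Nat.mul_le_mul_left _ (by omega)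
  rw [choose_succ_succ']
  omega

theorem choose_succ_le_two_mul_choose {n k : ℕ} (h : 2 * k ≤ n + 1) :
    (n + 1).choose k ≤ 2 * n.choose k := by
  obtain _ | j := k
  · simp
  have hinc : n.choose j ≤ n.choose (j + 1) := by
    refine Nat.le_of_mul_le_mul_right ?_ j.succ_pos
    rw [choose_succ_right_eq]
    exact Nat.mul_le_mul_left _ (by omega)
  rw [choose_succ_succ']
  omega

end Nat

lemma two_zpow_neg_succ_mul (n : ℕ) (x : ℝ) :
    (2 : ℝ) ^ (-((n + 1 : ℕ) : ℤ)) * x = (2 : ℝ) ^ (-(n : ℤ)) * (x / 2) := by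
  push_cast
  rw [neg_add, zpow_add₀ two_ne_zero]
  ring

lemma monotoneOn_two_zpow_neg_mul_choose (k : ℕ) :
    MonotoneOn (fun n : ℕ ↦ (2 : ℝ) ^ (-(n : ℤ)) * n.choose k) (Set.Iic (2 * k - 1)) := by
  refine monotoneOn_of_le_add_one Set.ordConnected_Iic fun n _ _ hn ↦ ?_
  have hchoose : 2 * n.choose k ≤ (n + 1).choose k :=
    Nat.two_mul_choose_le_choose_succ ((Set.mem_Iic.1 hn).trans (Nat.sub_le _ _))
  rw [two_zpow_neg_succ_mul]
  gcongr
  rw [le_div_iff₀' two_pos]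
  exact_mod_cast hchoose

lemma antitoneOn_two_zpow_neg_mul_choose (k : ℕ) :
    AntitoneOn (fun n : ℕ ↦ (2 : ℝ) ^ (-(n : ℤ)) * n.choose k) (Set.Ici (2 * k - 1)) := by
  refine antitoneOn_of_add_one_le Set.ordConnected_Ici fun n _ hn _ ↦ ?_
  have hchoose : (n + 1).choose k ≤ 2 * n.choose k :=
    Nat.choose_succ_le_two_mul_choose (Nat.le_add_of_sub_le (Set.mem_Ici.1 hn))
  rw [two_zpow_neg_succ_mul]
  gcongr
  rw [div_le_iff₀' two_pos]
  exact_mod_cast hchoose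

/-- For `B ≥ 1` and every `γ`, `2^(-γ) * (γ choose B) ≤ 2^(1-2B) * ((2B-1) choose B)`;
i.e. `γ ↦ 2^(-γ) * (γ choose B)` is maximized at `γ = 2B - 1`. -/
theorem stmt_11 (B γ : ℕ) (hB : 1 ≤ B) :
    (2 : ℝ) ^ (-(γ : ℤ)) * (Nat.choose γ B : ℝ)
      ≤ (2 : ℝ) ^ ((1 : ℤ) - 2 * (B : ℤ)) * (Nat.choose (2 * B - 1) B : ℝ) := by
  have hexp : (1 : ℤ) - 2 * B = -((2 * B - 1 : ℕ) : ℤ) := by omega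
  rw [hexp]
  rcases le_total γ (2 * B - 1) with h | h
  · exact monotoneOn_two_zpow_neg_mul_choose B h (Set.mem_Iic.2 le_rfl) h
  · exact antitoneOn_two_zpow_neg_mul_choose B (Set.mem_Ici.2 le_rfl) h h
end

section
/- For all natural numbers B and ℓ with 2 ≤ B < ℓ, one has (2B−1)! · (Bℓ − B)! · (Bℓ)^B < (B−1)! · (Bℓ)! · (2B)^B; equivalently, (2B−1)!·(Bℓ−B)! / ((B−1)!·(Bℓ)!) < (2B)^B / (Bℓ)^B as real numbers. -/
/-!
Write `x = Bℓ`. Cancelling `(B-1)!` and `(x-B)!` leaves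
`∏_{i<B} (B+i) x < ∏_{i<B} (x-i) 2B`. The factors cannot be compared one by one, but the
products of the factors with indices `i` and `j = B-1-i` can: by AM-GM
`4(B+i)(B+j) ≤ (3B-1)²`, while `(x-i)(x-j) ≥ x(x-B+1)`, and
`(3B-1)² x < 16B²(x-B+1)` as soon as `x ≥ 3B`, which holds since `ℓ ≥ 3`.
-/

open Finset Nat

theorem Finset.prod_range_lt_prod_range_of_mul_reflect_lt {R : Type*} [CommSemiring R]
    [LinearOrder R] [IsStrictOrderedRing R] {n : ℕ} {f g : ℕ → R} (hn : n ≠ 0)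
    (hf : ∀ i < n, 0 < f i) (hg : ∀ i < n, 0 ≤ g i)
    (hfg : ∀ i < n, f i * f (n - 1 - i) < g i * g (n - 1 - i)) :
    ∏ i ∈ range n, f i < ∏ i ∈ range n, g i := by
  have hsq (u : ℕ → R) : (∏ i ∈ range n, u i) ^ 2 = ∏ i ∈ range n, u i * u (n - 1 - i) := by
    rw [prod_mul_distrib, prod_range_reflect u n, sq]
  refine lt_of_pow_lt_pow_left₀ 2 (prod_nonneg fun i hi => hg i (mem_range.1 hi)) ?_
  rw [hsq, hsq]
  refine prod_lt_prod_of_nonempty (fun i hi => ?_) (fun i hi => hfg i (mem_range.1 hi))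
    (nonempty_range_iff.2 hn)
  have hi := mem_range.1 hi
  exact mul_pos (hf i hi) (hf _ (by omega))

theorem Nat.add_mul_mul_add_mul_lt_sub_mul_mul_sub_mul {i j B x : ℕ} (hij : i + j + 1 = B)
    (hx : 3 * B ≤ x) :
    (B + i) * x * ((B + j) * x) < (x - i) * (2 * B) * ((x - j) * (2 * B)) := by
  have hi : i ≤ x := by omega
  have hj : j ≤ x := by omega
  zify [hi, hj] at hij hx ⊢
  have hB : (1 : ℤ) ≤ B := by omega
  have hx0 : (0 : ℤ) < x := by omega
  have amgm : 4 * ((B + i) * (B + j) : ℤ) ≤ (3 * B - 1) ^ 2 := by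
    nlinarith [sq_nonneg ((i : ℤ) - j)]
  have hprod : (x : ℤ) * (x - B + 1) ≤ (x - i) * (x - j) := by
    nlinarith [mul_nonneg (Int.natCast_nonneg i) (Int.natCast_nonneg j)]
  have hlin : (3 * B - 1 : ℤ) ^ 2 * x < 16 * B ^ 2 * (x - B + 1) := by
    nlinarith [mul_le_mul_of_nonneg_right hx (by nlinarith : (0 : ℤ) ≤ 7 * B ^ 2 + 6 * B - 1)]
  refine lt_of_mul_lt_mul_left (a := 4) ?_ (by norm_num)
  calc 4 * ((B + i) * x * ((B + j) * x) : ℤ) = 4 * ((B + i) * (B + j)) * x ^ 2 := by ring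
    _ ≤ (3 * B - 1) ^ 2 * x ^ 2 := by gcongr
    _ = (3 * B - 1) ^ 2 * x * x := by ring
    _ < 16 * B ^ 2 * (x - B + 1) * x := by gcongr
    _ = 16 * B ^ 2 * (x * (x - B + 1)) := by ring
    _ ≤ 16 * B ^ 2 * ((x - i) * (x - j)) := by gcongr
    _ = 4 * ((x - i) * (2 * B) * ((x - j) * (2 * B))) := by ring

/-- For `2 ≤ B < ℓ` one has
`(2B-1)! · (Bℓ-B)! · (Bℓ)^B < (B-1)! · (Bℓ)! · (2B)^B`. -/
theorem stmt_12 (B ℓ : ℕ) (hB : 2 ≤ B) (hℓ : B < ℓ) :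
    Nat.factorial (2 * B - 1) * Nat.factorial (B * ℓ - B) * (B * ℓ) ^ B <
      Nat.factorial (B - 1) * Nat.factorial (B * ℓ) * (2 * B) ^ B := by
  have hx : 3 * B ≤ B * ℓ := by nlinarith
  have hasc : (2 * B - 1)! = (B - 1)! * ∏ i ∈ range B, (B + i) := by
    rw [← ascFactorial_eq_prod_range, factorial_mul_ascFactorial' B B (by omega), two_mul]
  have hdesc : (B * ℓ)! = (B * ℓ - B)! * ∏ i ∈ range B, (B * ℓ - i) := by
    rw [← descFactorial_eq_prod_range, factorial_mul_descFactorial (by omega)]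
  have key : (∏ i ∈ range B, (B + i)) * (B * ℓ) ^ B <
      (∏ i ∈ range B, (B * ℓ - i)) * (2 * B) ^ B := by
    simpa only [← prod_mul_pow_card, card_range] using
      prod_range_lt_prod_range_of_mul_reflect_lt (by omega)
        (fun i _ => Nat.mul_pos (by omega) (by omega)) (fun i _ => Nat.zero_le _)
        (fun i hi => add_mul_mul_add_mul_lt_sub_mul_mul_sub_mul (by omega) hx)
  rw [hasc, hdesc]
  calc (B - 1)! * (∏ i ∈ range B, (B + i)) * (B * ℓ - B)! * (B * ℓ) ^ B
      = (B - 1)! * (B * ℓ - B)! * ((∏ i ∈ range B, (B + i)) * (B * ℓ) ^ B) := by ring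
    _ < (B - 1)! * (B * ℓ - B)! * ((∏ i ∈ range B, (B * ℓ - i)) * (2 * B) ^ B) :=
      Nat.mul_lt_mul_of_pos_left key (by positivity)
    _ = (B - 1)! * ((B * ℓ - B)! * ∏ i ∈ range B, (B * ℓ - i)) * (2 * B) ^ B := by ring
end

section
/- For all natural numbers B and ℓ with 2 ≤ B < ℓ, the real number α'(B,ℓ) := 2^{1−2B} · ℓ · (2B−1)!·(Bℓ−B)! / ((B−1)!·(Bℓ)!) satisfies α'(B,ℓ) ≤ (2ℓ)^{1−B}. -/
/-!
Cancelling `(B-1)!` and `(Bℓ-B)!` turns `α'(B,ℓ)` into `2^(1-2B) ℓ (2B-1)_B / (Bℓ)_B`, with falling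
factorials `(n)_B`, and the claim into `ℓ^B (2B-1)_B ≤ 2^B (Bℓ)_B`. This is a product of the
factorwise inequalities `ℓ (2B-1-i) ≤ 2 (Bℓ-i)` for `i < B`, which amount to `0 ≤ ℓ + (ℓ-2) i`.
-/

open Nat

theorem factorial_two_mul_sub_one_eq (B : ℕ) :
    (2 * B - 1)! = (B - 1)! * (2 * B - 1).descFactorial B := by
  rw [← Nat.factorial_mul_descFactorial (show B ≤ 2 * B - 1 by omega),
    show 2 * B - 1 - B = B - 1 by omega]

theorem mul_two_mul_sub_one_sub_le {B ℓ i : ℕ} (hi : i < B) (hℓ : 2 ≤ ℓ) :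
    ℓ * (2 * B - 1 - i) ≤ 2 * (B * ℓ - i) := by
  have hiBℓ : i ≤ B * ℓ := hi.le.trans (Nat.le_mul_of_pos_right B (by omega))
  zify [hiBℓ, show i ≤ 2 * B - 1 by omega, show 1 ≤ 2 * B by omega]
  nlinarith [mul_nonneg (Int.natCast_nonneg i) (show (0 : ℤ) ≤ ℓ - 2 by omega)]

theorem pow_mul_descFactorial_le {B ℓ : ℕ} (hℓ : B < ℓ) :
    ℓ ^ B * (2 * B - 1).descFactorial B ≤ 2 ^ B * (B * ℓ).descFactorial B := by
  have h := Finset.prod_le_prod' fun i (hi : i ∈ Finset.range B) =>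
    have hiB : i < B := Finset.mem_range.mp hi
    mul_two_mul_sub_one_sub_le hiB (show 2 ≤ ℓ by omega)
  rwa [← Finset.pow_card_mul_prod, ← Finset.pow_card_mul_prod, Finset.card_range,
    ← Nat.descFactorial_eq_prod_range, ← Nat.descFactorial_eq_prod_range] at h

theorem two_zpow_mul_mul_div_le {ℓ a b : ℝ} {B : ℕ} (hℓ : 0 < ℓ) (hb : 0 < b)
    (h : ℓ ^ B * a ≤ 2 ^ B * b) :
    (2 : ℝ) ^ ((1 : ℤ) - 2 * (B : ℤ)) * ℓ * a / b ≤ (2 * ℓ) ^ ((1 : ℤ) - (B : ℤ)) := by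
  have hsplit : (2 : ℝ) ^ ((1 : ℤ) - 2 * (B : ℤ)) * ℓ * a / b
      = (2 * ℓ) ^ ((1 : ℤ) - (B : ℤ)) * (ℓ ^ B * a / (2 ^ B * b)) := by
    rw [show (2 : ℤ) * B = ((2 * B : ℕ) : ℤ) by push_cast; rfl, zpow_sub₀ (by norm_num),
      zpow_sub₀ (by positivity), zpow_natCast, zpow_natCast, zpow_one, zpow_one, two_mul, pow_add,
      mul_pow]
    field_simp
  rw [hsplit]
  exact mul_le_of_le_one_right (by positivity) ((div_le_one (by positivity)).mpr h)

theorem stmt_13_general (B ℓ : ℕ) (hℓ : B < ℓ) :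
    (2 : ℝ) ^ ((1 : ℤ) - 2 * (B : ℤ)) * (ℓ : ℝ) *
        ((Nat.factorial (2 * B - 1) : ℝ) * (Nat.factorial (B * ℓ - B) : ℝ)) /
        ((Nat.factorial (B - 1) : ℝ) * (Nat.factorial (B * ℓ) : ℝ))
      ≤ (2 * (ℓ : ℝ)) ^ ((1 : ℤ) - (B : ℤ)) := by
  have hBBℓ : B ≤ B * ℓ := Nat.le_mul_of_pos_right B (by omega)
  rw [factorial_two_mul_sub_one_eq, ← Nat.factorial_mul_descFactorial hBBℓ]
  have hD : 0 < (B * ℓ).descFactorial B := Nat.descFactorial_pos.mpr hBBℓ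
  push_cast
  calc _ = (2 : ℝ) ^ ((1 : ℤ) - 2 * (B : ℤ)) * ℓ * (2 * B - 1).descFactorial B
        / (B * ℓ).descFactorial B := by field_simp
    _ ≤ _ := two_zpow_mul_mul_div_le (by exact_mod_cast hℓ.pos) (by exact_mod_cast hD)
        (by exact_mod_cast pow_mul_descFactorial_le hℓ)

/-- For `2 ≤ B < ℓ`, the quantity
`α'(B,ℓ) = 2^(1-2B) · ℓ · (2B-1)!·(Bℓ-B)! / ((B-1)!·(Bℓ)!)` satisfies
`α'(B,ℓ) ≤ (2ℓ)^(1-B)`. -/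
theorem stmt_13 (B ℓ : ℕ) (hB : 2 ≤ B) (hℓ : B < ℓ) :
    (2 : ℝ) ^ ((1 : ℤ) - 2 * (B : ℤ)) * (ℓ : ℝ) *
        ((Nat.factorial (2 * B - 1) : ℝ) * (Nat.factorial (B * ℓ - B) : ℝ)) /
        ((Nat.factorial (B - 1) : ℝ) * (Nat.factorial (B * ℓ) : ℝ))
      ≤ (2 * (ℓ : ℝ)) ^ ((1 : ℤ) - (B : ℤ)) :=
  stmt_13_general B ℓ hℓ
end

section
/- For all natural numbers γ, B, ℓ with 2 ≤ B < ℓ, the real number 2^{−γ} · (γ choose B) · ℓ / ((Bℓ) choose B) is at most (2ℓ)^{1−B}. (This bounds the probability that an adversary making γ guesses in the leaky-AND/leaky-OT box goes undetected and fills some bucket entirely with leaky objects.) -/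
/-!
As a function of `n`, `(n choose k) / 2^n` grows while `n < 2k` and decreases
afterwards (the ratio of consecutive terms is `(n+1) / (2(n+1-k))`), so it is at most
`(2k choose k) / 4^k`. And `(2k choose k) · ℓ^k ≤ 2^k · (kℓ choose k)` for `ℓ ≥ 2`, comparing
the falling factorials factor by factor: `(2k - i) ℓ ≤ 2 (kℓ - i)`. Together they bound the
left-hand side by `ℓ^(1-B) / 2^B`, half the claimed bound.
-/

open Finset

theorem two_mul_choose_le_choose_succ {n k : ℕ} (h : n + 1 ≤ 2 * k) :
    2 * n.choose k ≤ (n + 1).choose k := by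
  rcases lt_or_ge n k with hnk | hkn
  · simp [Nat.choose_eq_zero_of_lt hnk]
  refine Nat.le_of_mul_le_mul_right (c := n + 1 - k) ?_ (by omega)
  calc 2 * n.choose k * (n + 1 - k) = n.choose k * (2 * (n + 1 - k)) := by ring
    _ ≤ n.choose k * (n + 1) := Nat.mul_le_mul_left _ (by omega)
    _ = (n + 1).choose k * (n + 1 - k) := Nat.choose_mul_succ_eq n k

theorem choose_succ_le_two_mul_choose {n k : ℕ} (h : 2 * k ≤ n + 1) :
    (n + 1).choose k ≤ 2 * n.choose k := by
  refine Nat.le_of_mul_le_mul_right (c := n + 1 - k) ?_ (by omega)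
  calc (n + 1).choose k * (n + 1 - k) = n.choose k * (n + 1) := (Nat.choose_mul_succ_eq n k).symm
    _ ≤ n.choose k * (2 * (n + 1 - k)) := Nat.mul_le_mul_left _ (by omega)
    _ = 2 * n.choose k * (n + 1 - k) := by ring

theorem choose_div_two_pow_le_choose_succ_div_two_pow {n k : ℕ} (h : n + 1 ≤ 2 * k) :
    (n.choose k : ℝ) / 2 ^ n ≤ (n + 1).choose k / 2 ^ (n + 1) := by
  rw [pow_succ, ← div_div, le_div_iff₀ two_pos, div_mul_eq_mul_div, mul_comm]
  gcongr
  exact_mod_cast two_mul_choose_le_choose_succ h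

theorem choose_succ_div_two_pow_le_choose_div_two_pow {n k : ℕ} (h : 2 * k ≤ n + 1) :
    ((n + 1).choose k : ℝ) / 2 ^ (n + 1) ≤ n.choose k / 2 ^ n := by
  rw [pow_succ, ← div_div, div_le_iff₀ two_pos, div_mul_eq_mul_div, mul_comm]
  gcongr
  exact_mod_cast choose_succ_le_two_mul_choose h

theorem choose_div_two_pow_le_choose_two_mul_div (n k : ℕ) :
    (n.choose k : ℝ) / 2 ^ n ≤ (2 * k).choose k / 2 ^ (2 * k) := by
  rcases le_total n (2 * k) with hn | hn
  · exact Nat.decreasingInduction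
      (motive := fun m _ ↦ (m.choose k : ℝ) / 2 ^ m ≤ (2 * k).choose k / 2 ^ (2 * k))
      (fun m hm ih ↦ (choose_div_two_pow_le_choose_succ_div_two_pow hm).trans ih) le_rfl hn
  · exact antitoneOn_nat_Ici_of_succ_le (f := fun n ↦ (n.choose k : ℝ) / 2 ^ n)
      (fun m hm ↦ choose_succ_div_two_pow_le_choose_div_two_pow (by omega))
      (le_refl (2 * k)) hn hn

theorem descFactorial_mul_pow_le_pow_mul_descFactorial {a m : ℕ} (ham : a ≤ m) (n k : ℕ) :
    (a * n).descFactorial k * m ^ k ≤ a ^ k * (n * m).descFactorial k := by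
  have pow_eq_prod (c : ℕ) : c ^ k = ∏ _i ∈ range k, c := by simp
  rw [Nat.descFactorial_eq_prod_range, Nat.descFactorial_eq_prod_range, pow_eq_prod m,
    pow_eq_prod a, ← prod_mul_distrib, ← prod_mul_distrib]
  refine prod_le_prod' fun i _ ↦ ?_
  rw [Nat.sub_mul, Nat.mul_sub, ← mul_assoc]
  exact Nat.sub_le_sub_left ((Nat.mul_le_mul_right i ham).trans_eq (mul_comm m i)) _

theorem choose_mul_pow_le_pow_mul_choose {a m : ℕ} (ham : a ≤ m) (n k : ℕ) :
    (a * n).choose k * m ^ k ≤ a ^ k * (n * m).choose k := by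
  have h := descFactorial_mul_pow_le_pow_mul_descFactorial ham n k
  rw [Nat.descFactorial_eq_factorial_mul_choose, Nat.descFactorial_eq_factorial_mul_choose] at h
  exact Nat.le_of_mul_le_mul_left (by linarith) k.factorial_pos

/-- For `2 ≤ B < ℓ` and every `γ`,
`2^(-γ) · (γ choose B) · ℓ / ((Bℓ) choose B) ≤ (2ℓ)^(1-B)`. -/
theorem stmt_14 (γ B ℓ : ℕ) (hB : 2 ≤ B) (hℓ : B < ℓ) :
    (2 : ℝ) ^ (-(γ : ℤ)) * (Nat.choose γ B : ℝ) * (ℓ : ℝ) / (Nat.choose (B * ℓ) B : ℝ)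
      ≤ (2 * (ℓ : ℝ)) ^ ((1 : ℤ) - (B : ℤ)) := by
  have hℓ2 : 2 ≤ ℓ := by omega
  have hchoose : (0 : ℝ) < (B * ℓ).choose B :=
    mod_cast Nat.choose_pos (Nat.le_mul_of_pos_right B (by omega))
  have hcentral : ((2 * B).choose B : ℝ) * ℓ ^ B ≤ 2 ^ B * (B * ℓ).choose B :=
    mod_cast choose_mul_pow_le_pow_mul_choose hℓ2 B B
  rw [zpow_neg, zpow_natCast, zpow_sub₀ (by positivity), zpow_one, zpow_natCast]
  calc (2 ^ γ)⁻¹ * (γ.choose B : ℝ) * ℓ / (B * ℓ).choose B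
      = (γ.choose B : ℝ) / 2 ^ γ * ℓ / (B * ℓ).choose B := by ring
    _ ≤ ((2 * B).choose B : ℝ) / 2 ^ (2 * B) * ℓ / (B * ℓ).choose B := by
      gcongr ?_ * _ / _; exact choose_div_two_pow_le_choose_two_mul_div γ B
    _ ≤ 2 * ℓ / (2 * ℓ) ^ B := by
      rw [div_le_div_iff₀ hchoose (by positivity), mul_pow, pow_mul']
      calc ((2 * B).choose B : ℝ) / (2 ^ B) ^ 2 * ℓ * (2 ^ B * ℓ ^ B)
          = ℓ * (((2 * B).choose B : ℝ) * ℓ ^ B) / 2 ^ B := by field_simp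
        _ ≤ ℓ * (2 ^ B * (B * ℓ).choose B) / 2 ^ B := by gcongr
        _ = ℓ * (B * ℓ).choose B := by field_simp
        _ ≤ 2 * ℓ * (B * ℓ).choose B := by gcongr; linarith
end

section
/- Let κ and p be natural numbers, let b : Fin p → ZMod 2 be arbitrary fixed bits, and let Δ, K_1, …, K_p be drawn independently and uniformly at random from the vectors Fin κ → ZMod 2, with MACs M_i = K_i + b_i • Δ. Then for every function f : (Fin p → (Fin κ → ZMod 2)) → (Fin κ → ZMod 2), the probability that f(M_1, …, M_p) = Δ is exactly 2^{−κ}. -/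
open scoped ENNReal

/-!
Shearing `(Δ, K) ↦ (Δ, K + b • Δ)` is a bijection of the sample space, so the MACs together
with `Δ` are again uniform, i.e. the MACs are independent of `Δ`. A guess `f M` that is a
function of the MACs alone then hits the independent uniform `Δ` with probability
`1 / #(Fin κ → ZMod 2) = 2^(-κ)`.
-/

namespace PMF

variable {α β : Type*} [Fintype α] [Fintype β]

theorem sum_uniformOfFintype_mul_comp_perm [Nonempty α] (e : Equiv.Perm α)
    (φ : α → ℝ≥0∞) :
    ∑ x, uniformOfFintype α x * φ (e x) = ∑ x, uniformOfFintype α x * φ x := by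
  simpa only [uniformOfFintype_apply] using Equiv.sum_comp e fun x => uniformOfFintype α x * φ x

theorem sum_uniformOfFintype_prod_mul_ite_comp_snd_eq_fst [DecidableEq α] [Nonempty α]
    [Nonempty β] (f : β → α) :
    ∑ x : α × β, uniformOfFintype (α × β) x * (if f x.2 = x.1 then 1 else 0)
      = (Fintype.card α : ℝ≥0∞)⁻¹ := by
  have hits : ∑ x : α × β, (if f x.2 = x.1 then 1 else 0 : ℝ≥0∞) = Fintype.card β := by
    rw [Fintype.sum_prod_type_right]
    simp
  simp only [uniformOfFintype_apply, ← Finset.mul_sum, hits, Fintype.card_prod, Nat.cast_mul]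
  rw [ENNReal.mul_inv (by simp) (by simp), mul_assoc,
    ENNReal.inv_mul_cancel (by simp) (by simp), mul_one]

end PMF

/-- With `Δ` and the keys `K₁, …, K_p` drawn independently and uniformly from
`Fin κ → ZMod 2` and MACs `Mᵢ = Kᵢ + bᵢ • Δ`, any adversary `f` seeing all MACs guesses
the global key `Δ` with probability exactly `2^(-κ)`. -/
theorem stmt_16 (κ p : ℕ) (b : Fin p → ZMod 2)
    (f : (Fin p → Fin κ → ZMod 2) → (Fin κ → ZMod 2)) :
    ∑ x : (Fin κ → ZMod 2) × (Fin p → Fin κ → ZMod 2),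
      (PMF.uniformOfFintype ((Fin κ → ZMod 2) × (Fin p → Fin κ → ZMod 2))) x *
        (if f (fun i => x.2 i + b i • x.1) = x.1 then 1 else 0)
    = (2 : ℝ≥0∞) ^ (-(κ : ℤ)) := by
  let shear : Equiv.Perm ((Fin κ → ZMod 2) × (Fin p → Fin κ → ZMod 2)) :=
    (Equiv.refl _).prodShear fun Δ => Equiv.addRight fun i => b i • Δ
  refine (PMF.sum_uniformOfFintype_mul_comp_perm shear
    fun y => if f y.2 = y.1 then 1 else 0).trans ?_
  rw [PMF.sum_uniformOfFintype_prod_mul_ite_comp_snd_eq_fst, Fintype.card_fun, ZMod.card,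
    Fintype.card_fin, ENNReal.zpow_neg, zpow_natCast, Nat.cast_pow, Nat.cast_ofNat]
end

section
/- Let κ and p be natural numbers, let b : Fin p → ZMod 2 be arbitrary fixed bits, and let Δ, K_1, …, K_p be drawn independently and uniformly at random from the vectors Fin κ → ZMod 2, with MACs M_i = K_i + b_i • Δ. Then for every function f : (Fin p → (Fin κ → ZMod 2)) → (Fin κ → ZMod 2) and every choice of coefficients a : Fin p → ZMod 2, the probability that f(M_1, …, M_p) = Σ_i a_i • K_i + (1 + Σ_i a_i·b_i) • Δ is exactly 2^{−κ}; that is, forging a valid MAC on the flipped bit 1 + Σ_i a_i b_i of any ZMod 2 linear combination of authenticated bits succeeds with probability exactly 2^{−κ}. -/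
/-!
Change variables from the keys `(Δ, K)` to the MACs `(Δ, M)`, `M = K + b • Δ`: this shear is a
bijection, so `(Δ, M)` is again uniform. Since `∑ aᵢ Kᵢ + (1 + ∑ aᵢ bᵢ) Δ = ∑ aᵢ Mᵢ + Δ`, a
forgery succeeds exactly when `Δ = f M - ∑ aᵢ Mᵢ`: for each `M` exactly one `Δ` out of
`|V| = 2^κ`.
-/

open scoped ENNReal

open Finset

theorem sum_uniformOfFintype_mul_ite {α : Type*} [Fintype α] [Nonempty α]
    (P : α → Prop) [DecidablePred P] :
    ∑ x, PMF.uniformOfFintype α x * (if P x then 1 else 0) = #{x | P x} / Fintype.card α := by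
  simp [PMF.uniformOfFintype_apply, Finset.sum_ite, div_eq_mul_inv]

theorem card_filter_fst_eq_apply_snd {α β : Type*} [Fintype α] [Fintype β] [DecidableEq α]
    (g : β → α) : #{x : α × β | x.1 = g x.2} = Fintype.card β := by
  rw [← Finset.card_univ]
  exact Finset.card_nbij' Prod.snd (fun y => (g y, y)) (by simp) (by simp)
    (by rintro ⟨_, _⟩; simp_all) (fun _ _ => rfl)

variable {R V ι : Type*} [Ring R] [AddCommGroup V] [Module R V] [Fintype ι]

def keysToMacs (b : ι → R) : V × (ι → V) ≃ V × (ι → V) :=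
  Equiv.prodShear (Equiv.refl V) fun Δ => Equiv.addRight fun i => b i • Δ

theorem sum_smul_add_one_add_sum_mul_smul (a b : ι → R) (Δ : V) (K : ι → V) :
    ∑ i, a i • K i + (1 + ∑ i, a i * b i) • Δ = ∑ i, a i • (K i + b i • Δ) + Δ := by
  simp only [smul_add, sum_add_distrib, add_smul, one_smul, sum_smul, mul_smul]
  abel

theorem sum_uniformOfFintype_forge_eq_inv_card [DecidableEq ι] [Fintype V] [DecidableEq V]
    (b a : ι → R) (f : (ι → V) → V) :
    ∑ x : V × (ι → V), PMF.uniformOfFintype (V × (ι → V)) x *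
        (if f (fun i => x.2 i + b i • x.1)
            = ∑ i, a i • x.2 i + (1 + ∑ i, a i * b i) • x.1 then 1 else 0)
      = (Fintype.card V : ℝ≥0∞)⁻¹ := by
  have hcard : #{x : V × (ι → V) | f (fun i => x.2 i + b i • x.1)
        = ∑ i, a i • x.2 i + (1 + ∑ i, a i * b i) • x.1}
      = #{y : V × (ι → V) | y.1 = f y.2 - ∑ i, a i • y.2 i} := by
    refine Finset.card_equiv (keysToMacs b) fun x => ?_
    simp only [mem_filter, mem_univ, true_and, keysToMacs, Equiv.prodShear_apply,
      Equiv.refl_apply, Equiv.coe_addRight, Pi.add_apply, sum_smul_add_one_add_sum_mul_smul]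
    exact (eq_sub_iff_add_eq'.trans eq_comm).symm
  rw [sum_uniformOfFintype_mul_ite, hcard,
    card_filter_fst_eq_apply_snd fun M => f M - ∑ i, a i • M i, Fintype.card_prod, Nat.cast_mul,
    ENNReal.div_eq_inv_mul, ENNReal.mul_inv (by simp) (by simp), mul_assoc,
    ENNReal.inv_mul_cancel (by simp) (by simp), mul_one]

/-- With `Δ` and the keys `K₁, …, K_p` drawn independently and uniformly from
`Fin κ → ZMod 2` and MACs `Mᵢ = Kᵢ + bᵢ • Δ`, any adversary `f` seeing all MACs forges a
valid MAC `∑ᵢ aᵢ • Kᵢ + (1 + ∑ᵢ aᵢ bᵢ) • Δ` on the flipped bit `1 + ∑ᵢ aᵢ bᵢ` of the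
linear combination `∑ᵢ aᵢ bᵢ` with probability exactly `2^(-κ)`. -/
theorem stmt_17 (κ p : ℕ) (b : Fin p → ZMod 2)
    (f : (Fin p → Fin κ → ZMod 2) → (Fin κ → ZMod 2)) (a : Fin p → ZMod 2) :
    ∑ x : (Fin κ → ZMod 2) × (Fin p → Fin κ → ZMod 2),
      (PMF.uniformOfFintype ((Fin κ → ZMod 2) × (Fin p → Fin κ → ZMod 2))) x *
        (if f (fun i => x.2 i + b i • x.1)
            = (∑ i, a i • x.2 i) + (1 + ∑ i, a i * b i) • x.1 then 1 else 0)
    = (2 : ℝ≥0∞) ^ (-(κ : ℤ)) := by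
  rw [sum_uniformOfFintype_forge_eq_inv_card, ENNReal.zpow_neg, zpow_natCast]
  simp
end

section
/- Let ψ ≥ 1, n, τ be natural numbers with 9ψ ≤ 2n and 4(n + ψ) ≤ 3τ. Let (S, c) with S ∈ Finset (Fin τ) and c ∈ {0,1} be drawn from an arbitrary probability distribution L satisfying E_{(S,c)←L}[c · 2^{|S|}] ≤ 2^{τ/4}, and independently let A be drawn uniformly at random from the ψ × τ matrices over ZMod 2. Then the probability that c = 1 and the columns of A with indices outside S do not span the whole space Fin ψ → ZMod 2 is at most 2^{2−ψ}. -/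
/-! If the columns of `A` outside `S` do not span, some nonzero `v` is orthogonal to all of
them. For a fixed `v ≠ 0` each column lies in the hyperplane `v⊥` with probability `1/2`,
independently, so a union bound over the fewer than `2^ψ` vectors `v` bounds the probability by
`2^(ψ + |S| - τ)`. Averaging over `L` and using `E[c · 2^|S|] ≤ 2^(τ/4)` gives `2^(ψ - 3τ/4)`,
which is at most `2^(2-ψ)` because the hypotheses on `n` force `8ψ ≤ 3τ`. -/

open scoped ENNReal

attribute [local instance] Classical.propDecidable

open Finset Matrix

theorem Module.Dual.card_ker_mul_card_of_ne_zero {K V : Type*} [Field K] [AddCommGroup V]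
    [Module K V] {f : Module.Dual K V} (hf : f ≠ 0) :
    Nat.card (LinearMap.ker f) * Nat.card K = Nat.card V := by
  rw [Submodule.card_eq_card_quotient_mul_card (LinearMap.ker f),
    Nat.card_congr (f.quotKerEquivOfSurjective (LinearMap.surjective hf)).toEquiv]

theorem card_filter_dotProduct_eq_zero_mul_card {K m : Type*} [Field K] [Fintype K] [Fintype m]
    [DecidableEq m] {v : m → K} (hv : v ≠ 0) :
    #{w : m → K | v ⬝ᵥ w = 0} * Fintype.card K = Fintype.card K ^ Fintype.card m := by
  have hf : dotProductEquiv K m v ≠ 0 := by simpa using hv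
  have hker := Module.Dual.card_ker_mul_card_of_ne_zero hf
  simp only [Nat.card_eq_fintype_card, Fintype.card_fun] at hker
  rw [← hker, ← Fintype.card_subtype]
  rfl

theorem card_filter_forall_notMem {ι β : Type*} [Fintype ι] [DecidableEq ι] [Fintype β]
    (S : Finset ι) (p : β → Prop) :
    #{C : ι → β | ∀ j ∉ S, p (C j)} = Fintype.card β ^ #S * #{b | p b} ^ #Sᶜ := by
  have hpi : ({C : ι → β | ∀ j ∉ S, p (C j)} : Finset _) =
      Fintype.piFinset fun j => if j ∈ S then univ else ({b | p b} : Finset β) := by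
    ext C
    simp only [mem_filter, mem_univ, true_and, Fintype.mem_piFinset]
    refine forall_congr' fun j => ?_
    split_ifs <;> simp [*]
  rw [hpi, Fintype.card_piFinset, prod_apply_ite]
  simp [compl_eq_univ_sdiff, filter_notMem_eq_sdiff]

theorem exists_dotProduct_eq_zero_of_span_ne_top {K m : Type*} [Field K] [Fintype m]
    [DecidableEq m] {s : Set (m → K)} (hs : Submodule.span K s ≠ ⊤) :
    ∃ v ≠ 0, ∀ x ∈ s, v ⬝ᵥ x = 0 := by
  obtain ⟨f, hf, hle⟩ := (Submodule.span K s).exists_le_ker_of_lt_top hs.lt_top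
  refine ⟨(dotProductEquiv K m).symm f, by simpa using hf, fun x hx => ?_⟩
  simpa [← dotProductEquiv_apply_apply] using hle (Submodule.subset_span hx)

section
variable {K m ι : Type*} [Field K] [Fintype K] [Fintype m] [Fintype ι] [DecidableEq m]
  [DecidableEq ι]

theorem card_filter_forall_notMem_dotProduct_col_mul {v : m → K} (hv : v ≠ 0) (S : Finset ι) :
    #{A : Matrix m ι K | ∀ j ∉ S, v ⬝ᵥ (fun i => A i j) = 0} * Fintype.card K ^ #Sᶜ
      = Fintype.card K ^ (Fintype.card m * Fintype.card ι) := by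
  have htranspose : #{A : Matrix m ι K | ∀ j ∉ S, v ⬝ᵥ (fun i => A i j) = 0}
      = #{C : ι → m → K | ∀ j ∉ S, v ⬝ᵥ C j = 0} :=
    card_equiv (Equiv.piComm _) fun A => by simp; rfl
  rw [htranspose, card_filter_forall_notMem S (v ⬝ᵥ · = 0), mul_assoc, ← mul_pow,
    card_filter_dotProduct_eq_zero_mul_card hv, Fintype.card_fun, ← pow_add, card_add_card_compl,
    ← pow_mul]

theorem card_filter_span_cols_ne_top_mul_le (S : Finset ι) :
    #{A : Matrix m ι K | Submodule.span K ((fun j => fun i => A i j) '' {j | j ∉ S}) ≠ ⊤}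
        * Fintype.card K ^ #Sᶜ
      ≤ Fintype.card K ^ Fintype.card m * Fintype.card K ^ (Fintype.card m * Fintype.card ι) := by
  set q := Fintype.card K
  have hcover : ({A : Matrix m ι K |
        Submodule.span K ((fun j => fun i => A i j) '' {j | j ∉ S}) ≠ ⊤} : Finset _) ⊆
      ({v : m → K | v ≠ 0} : Finset _).biUnion
        fun v => {A : Matrix m ι K | ∀ j ∉ S, v ⬝ᵥ (fun i => A i j) = 0} := by
    intro A hA
    obtain ⟨v, hv, horth⟩ := exists_dotProduct_eq_zero_of_span_ne_top (mem_filter.mp hA).2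
    simp only [mem_biUnion, mem_filter, mem_univ, true_and]
    exact ⟨v, hv, fun j hj => horth _ ⟨j, hj, rfl⟩⟩
  calc _ ≤ (∑ v ∈ ({v : m → K | v ≠ 0} : Finset _),
          #{A : Matrix m ι K | ∀ j ∉ S, v ⬝ᵥ (fun i => A i j) = 0}) * q ^ #Sᶜ := by
        gcongr
        exact (card_le_card hcover).trans card_biUnion_le
    _ = ∑ v ∈ ({v : m → K | v ≠ 0} : Finset _), q ^ (Fintype.card m * Fintype.card ι) := by
        rw [sum_mul]
        exact sum_congr rfl fun v hv =>
          card_filter_forall_notMem_dotProduct_col_mul (mem_filter.mp hv).2 S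
    _ ≤ q ^ Fintype.card m * q ^ (Fintype.card m * Fintype.card ι) := by
        rw [sum_const, smul_eq_mul]
        gcongr
        exact (card_filter_le _ _).trans_eq (by simp [q])

theorem sum_uniformOfFintype_mul_span_cols_ne_top_le (S : Finset ι) :
    ∑ A : Matrix m ι K, PMF.uniformOfFintype (Matrix m ι K) A *
        (if Submodule.span K ((fun j => fun i => A i j) '' {j | j ∉ S}) ≠ ⊤ then 1 else 0)
      ≤ (Fintype.card K : ℝ≥0∞) ^ #S * ((Fintype.card K : ℝ≥0∞) ^ Fintype.card m /
          (Fintype.card K : ℝ≥0∞) ^ Fintype.card ι) := by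
  have hcount := card_filter_span_cols_ne_top_mul_le (K := K) (m := m) S
  rw [← card_add_card_compl S] at hcount
  set q := Fintype.card K
  have hq : (q : ℝ≥0∞) ≠ 0 := by simp [q, Fintype.card_ne_zero]
  have hcard : Fintype.card (Matrix m ι K) = q ^ (Fintype.card m * Fintype.card ι) := by
    show Fintype.card (m → ι → K) = _
    rw [Fintype.card_fun, Fintype.card_fun, ← pow_mul, mul_comm]
  simp only [PMF.uniformOfFintype_apply, mul_ite, mul_one, mul_zero, sum_ite, sum_const_zero,
    add_zero, sum_const, nsmul_eq_mul, hcard]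
  rw [← div_eq_mul_inv, ← card_add_card_compl S, pow_add, ← mul_div_assoc,
    ENNReal.mul_div_mul_left _ _ (pow_ne_zero _ hq) (by simp),
    ENNReal.div_le_iff (by simp [hq]) (by simp), ← ENNReal.mul_div_right_comm,
    ENNReal.le_div_iff_mul_le (by simp [hq]) (by simp)]
  exact_mod_cast hcount

end

theorem two_rpow_mul_two_pow_div_le_zpow {ψ τ : ℕ} (h : 8 * ψ ≤ 3 * τ + 8) :
    (2 : ℝ≥0∞) ^ ((τ : ℝ) / 4) * (2 ^ ψ / 2 ^ τ) ≤ 2 ^ ((2 : ℤ) - ψ) := by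
  rw [← ENNReal.rpow_natCast, ← ENNReal.rpow_natCast,
    ← ENNReal.rpow_sub _ _ two_ne_zero ENNReal.ofNat_ne_top,
    ← ENNReal.rpow_add _ _ two_ne_zero ENNReal.ofNat_ne_top, ← ENNReal.rpow_intCast]
  apply ENNReal.rpow_le_rpow_of_exponent_le one_le_two
  have : (8 * ψ : ℝ) ≤ 3 * τ + 8 := by exact_mod_cast h
  push_cast
  linarith

theorem stmt_18_general (ψ n τ : ℕ) (hn : 9 * ψ ≤ 2 * n) (hτ : 4 * (n + ψ) ≤ 3 * τ)
    (L : PMF (Finset (Fin τ) × Bool))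
    (hL : ∑ sc : Finset (Fin τ) × Bool,
        L sc * (if sc.2 = true then 1 else 0) * 2 ^ sc.1.card
        ≤ (2 : ℝ≥0∞) ^ ((τ : ℝ) / 4)) :
    ∑ A : Matrix (Fin ψ) (Fin τ) (ZMod 2), ∑ sc : Finset (Fin τ) × Bool,
      (PMF.uniformOfFintype (Matrix (Fin ψ) (Fin τ) (ZMod 2))) A * L sc *
        (if sc.2 = true ∧
            Submodule.span (ZMod 2) ((fun j => fun i => A i j) '' {j | j ∉ sc.1}) ≠ ⊤
          then 1 else 0)
    ≤ (2 : ℝ≥0∞) ^ ((2 : ℤ) - (ψ : ℤ)) := by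
  set C : ℝ≥0∞ := 2 ^ ψ / 2 ^ τ
  have hbad (S : Finset (Fin τ)) :
      ∑ A : Matrix (Fin ψ) (Fin τ) (ZMod 2), PMF.uniformOfFintype _ A *
        (if Submodule.span (ZMod 2) ((fun j => fun i => A i j) '' {j | j ∉ S}) ≠ ⊤ then 1 else 0)
      ≤ 2 ^ #S * C := by
    have h := sum_uniformOfFintype_mul_span_cols_ne_top_le (K := ZMod 2) (m := Fin ψ) S
    simp only [ZMod.card, Fintype.card_fin, Nat.cast_ofNat] at h
    exact h
  calc _ = ∑ sc : Finset (Fin τ) × Bool, L sc * (if sc.2 = true then 1 else 0) *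
          ∑ A : Matrix (Fin ψ) (Fin τ) (ZMod 2), PMF.uniformOfFintype _ A *
            (if Submodule.span (ZMod 2) ((fun j => fun i => A i j) '' {j | j ∉ sc.1}) ≠ ⊤
              then 1 else 0) := by
        rw [sum_comm]
        refine sum_congr rfl fun sc _ => ?_
        rw [mul_sum]
        refine sum_congr rfl fun A _ => ?_
        split_ifs <;> simp_all [mul_comm]
    _ ≤ ∑ sc : Finset (Fin τ) × Bool,
          L sc * (if sc.2 = true then 1 else 0) * (2 ^ #sc.1 * C) := by
        gcongr with sc
        exact hbad sc.1
    _ = (∑ sc : Finset (Fin τ) × Bool,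
          L sc * (if sc.2 = true then 1 else 0) * 2 ^ #sc.1) * C := by
        simp only [sum_mul, mul_assoc]
    _ ≤ 2 ^ ((τ : ℝ) / 4) * C := by gcongr
    _ ≤ 2 ^ ((2 : ℤ) - ψ) := two_rpow_mul_two_pow_div_le_zpow (by omega)

/-- Key bound for the WaBit-to-aBit amplification: if `9ψ ≤ 2n`, `4(n+ψ) ≤ 3τ`, the leakage
distribution `L` on pairs `(S, c)` satisfies `E[(c : ℝ≥0∞) · 2^|S|] ≤ 2^(τ/4)`, and `A` is
a uniformly random `ψ × τ` matrix over `ZMod 2` independent of `(S, c)`, then the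
probability that `c = 1` and the columns of `A` outside `S` do not span `Fin ψ → ZMod 2`
is at most `2^(2-ψ)`. -/
theorem stmt_18 (ψ n τ : ℕ) (hψ : 1 ≤ ψ) (hn : 9 * ψ ≤ 2 * n) (hτ : 4 * (n + ψ) ≤ 3 * τ)
    (L : PMF (Finset (Fin τ) × Bool))
    (hL : ∑ sc : Finset (Fin τ) × Bool,
        L sc * (if sc.2 = true then 1 else 0) * 2 ^ sc.1.card
        ≤ (2 : ℝ≥0∞) ^ ((τ : ℝ) / 4)) :
    ∑ A : Matrix (Fin ψ) (Fin τ) (ZMod 2), ∑ sc : Finset (Fin τ) × Bool,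
      (PMF.uniformOfFintype (Matrix (Fin ψ) (Fin τ) (ZMod 2))) A * L sc *
        (if sc.2 = true ∧
            Submodule.span (ZMod 2) ((fun j => fun i => A i j) '' {j | j ∉ sc.1}) ≠ ⊤
          then 1 else 0)
    ≤ (2 : ℝ≥0∞) ^ ((2 : ℤ) - (ψ : ℤ)) :=
  stmt_18_general ψ n τ hn hτ L hL
end
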